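/- arXiv:2301.02054 — 18 statements merged into one kernel-verified Lean document; each statement's English description precedes it below -/
import Mathlib

section
/- Let u be a solution of the difference equation a(n)u_{n+1} = b(n)u_n − c(n)u_{n−1} for n ≥ 1, where a(n), b(n), c(n) > 0 for all integers n ≥ 1. Define the infinite matrix M₀ : ℕ × ℕ → ℝ by M₀(0,0) = u_1, M₀(0,1) = c(1), M₀(1,0) = u_0, M₀(1,1) = b(1), M₀(1,2) = c(2), and for i ≥ 2: M₀(i,i−1) = a(i−1), M₀(i,i) = b(i), M₀(i,i+1) = c(i+1), with all other entries zero. Then u_n > 0 for all n ≥ 0 if and only if u_0 > 0 and M₀ is totally nonnegative. -/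
/-!
The matrix `M₀` is tridiagonal, so its leading principal minors are continuants, and comparing
their three-term recurrence with that of `u` shows that the leading minor of order `n + 1` is
`a 1 ⋯ a n * u (n + 1)`.

A tridiagonal matrix with nonnegative entries is totally nonnegative as soon as its principal
minors on consecutive indices are nonnegative: any other minor is an entry or is block
triangular, hence a product of smaller minors. If all leading principal minors are positive,
so are all consecutive principal minors, because the Casoratian of the continuants starting
at `p` and at `p + 1` is a product of the nonnegative off-diagonal products
`M (i + 1) i * M i (i + 1)`.

Conversely, total nonnegativity makes every `u (n + 1)` nonnegative, and the recurrence forbids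
`u (n + 1) = 0` after `u n > 0`, since then `a (n + 1) * u (n + 2) = - c (n + 1) * u n < 0`.
-/

/-- An infinite real matrix `M : ℕ → ℕ → ℝ` is totally nonnegative if every
minor (of every order `k ≥ 1`, with strictly increasing row and column
selections) is nonnegative. -/
def IsTotallyNonneg (M : ℕ → ℕ → ℝ) : Prop :=
  ∀ (k : ℕ) (r s : Fin (k + 1) → ℕ), StrictMono r → StrictMono s →
    0 ≤ (Matrix.of fun i j => M (r i) (s j)).det

open Matrix Finset

namespace Matrix

variable {R : Type*} [CommRing R]

theorem det_eq_det_mul_det_of_upperRight_eq_zero {t m : ℕ}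
    (A : Matrix (Fin (t + m)) (Fin (t + m)) R)
    (h : ∀ i j, A (Fin.castAdd m i) (Fin.natAdd t j) = 0) :
    A.det = (A.submatrix (Fin.castAdd m) (Fin.castAdd m)).det *
      (A.submatrix (Fin.natAdd t) (Fin.natAdd t)).det := by
  have hblocks : A.submatrix finSumFinEquiv finSumFinEquiv =
      fromBlocks (A.submatrix (Fin.castAdd m) (Fin.castAdd m)) 0
        (A.submatrix (Fin.natAdd t) (Fin.castAdd m))
        (A.submatrix (Fin.natAdd t) (Fin.natAdd t)) := by
    ext (i | i) (j | j) <;> simp [h]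
  rw [← det_submatrix_equiv_self finSumFinEquiv A, hblocks, det_fromBlocks_zero₁₂]

theorem det_eq_det_mul_det_of_lowerLeft_eq_zero {t m : ℕ}
    (A : Matrix (Fin (t + m)) (Fin (t + m)) R)
    (h : ∀ i j, A (Fin.natAdd t i) (Fin.castAdd m j) = 0) :
    A.det = (A.submatrix (Fin.castAdd m) (Fin.castAdd m)).det *
      (A.submatrix (Fin.natAdd t) (Fin.natAdd t)).det := by
  rw [← det_transpose, det_eq_det_mul_det_of_upperRight_eq_zero Aᵀ fun i j => h j i,
    ← transpose_submatrix, ← transpose_submatrix, det_transpose, det_transpose]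

theorem det_succ_of_lastCol_eq_zero {n : ℕ} (A : Matrix (Fin (n + 1)) (Fin (n + 1)) R)
    (h : ∀ i : Fin n, A i.castSucc (Fin.last n) = 0) :
    A.det = A (Fin.last n) (Fin.last n) * (A.submatrix Fin.castSucc Fin.castSucc).det := by
  rw [det_succ_column A (Fin.last n), Fin.sum_univ_castSucc, Finset.sum_eq_zero fun i _ => by
    rw [h, mul_zero, zero_mul]]
  simp [Fin.succAbove_last, ← two_mul, pow_mul]

theorem det_succ_succ_of_lastRow_lastCol_eq_zero {n : ℕ}
    (A : Matrix (Fin (n + 2)) (Fin (n + 2)) R)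
    (hrow : ∀ j : Fin n, A (Fin.last (n + 1)) j.castSucc.castSucc = 0)
    (hcol : ∀ i : Fin n, A i.castSucc.castSucc (Fin.last (n + 1)) = 0) :
    A.det = A (Fin.last (n + 1)) (Fin.last (n + 1)) * (A.submatrix Fin.castSucc Fin.castSucc).det -
      A (Fin.last (n + 1)) (Fin.last n).castSucc * A (Fin.last n).castSucc (Fin.last (n + 1)) *
        (A.submatrix (Fin.castSucc ∘ Fin.castSucc) (Fin.castSucc ∘ Fin.castSucc)).det := by
  have hminor : (A.submatrix Fin.castSucc (Fin.last n).castSucc.succAbove).det =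
      A (Fin.last n).castSucc (Fin.last (n + 1)) *
        (A.submatrix (Fin.castSucc ∘ Fin.castSucc) (Fin.castSucc ∘ Fin.castSucc)).det := by
    rw [det_succ_of_lastCol_eq_zero _ fun i => by
      simpa [Fin.succAbove_castSucc_self, Fin.succ_last] using hcol i]
    rw [submatrix_apply, Fin.succAbove_castSucc_self, Fin.succ_last, submatrix_submatrix]
    congr 3
    funext j
    exact Fin.succAbove_castSucc_of_lt _ _ (Fin.castSucc_lt_last j)
  rw [det_succ_row A (Fin.last (n + 1)), Fin.sum_univ_castSucc, Fin.sum_univ_castSucc,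
    Finset.sum_eq_zero fun j _ => by rw [hrow, mul_zero, zero_mul], Fin.succAbove_last, hminor]
  simp only [Fin.val_last, Fin.val_castSucc]
  rw [Odd.neg_one_pow ⟨n, by ring⟩, Even.neg_one_pow ⟨n + 1, rfl⟩]
  ring

end Matrix

def IsTridiagonal {R : Type*} [Zero R] (N : ℕ → ℕ → R) : Prop :=
  ∀ i j, i + 2 ≤ j ∨ j + 2 ≤ i → N i j = 0

def continuant {R : Type*} [CommRing R] (d g : ℕ → R) : ℕ → R
  | 0 => 1
  | 1 => d 0
  | n + 2 => d (n + 1) * continuant d g (n + 1) - g n * continuant d g n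

section Continuant

variable {R : Type*} [CommRing R]

theorem IsTridiagonal.det_eq_continuant {N : ℕ → ℕ → R} (hN : IsTridiagonal N) (n : ℕ) :
    (of fun i j : Fin n => N i j).det =
      continuant (fun i => N i i) (fun i => N (i + 1) i * N i (i + 1)) n := by
  induction n using Nat.twoStepInduction with
  | zero => simp [continuant]
  | one => simp [continuant]
  | more n ih₀ ih₁ =>
    rw [det_succ_succ_of_lastRow_lastCol_eq_zero _ (fun j => hN _ _ (by simp))
      (fun i => hN _ _ (by simp))]
    simp only [continuant, ← ih₀, ← ih₁, of_apply, Fin.val_last, Fin.val_castSucc]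
    rfl

theorem continuant_casoratian (d g : ℕ → R) (m : ℕ) :
    continuant (fun i => d (i + 1)) (fun i => g (i + 1)) (m + 1) * continuant d g (m + 1) -
      continuant d g (m + 2) * continuant (fun i => d (i + 1)) (fun i => g (i + 1)) m =
      ∏ i ∈ range (m + 1), g i := by
  induction m with
  | zero => simp [continuant]
  | succ m ih =>
    rw [prod_range_succ, ← ih]
    simp only [continuant]
    ring

theorem continuant_eq_prod_mul {a b c u d g : ℕ → R}
    (hu : ∀ n : ℕ, 1 ≤ n → a n * u (n + 1) = b n * u n - c n * u (n - 1))
    (hd₀ : d 0 = u 1) (hd : ∀ i, d (i + 1) = b (i + 1))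
    (hg₀ : g 0 = u 0 * c 1) (hg : ∀ i, g (i + 1) = a (i + 1) * c (i + 2)) (n : ℕ) :
    continuant d g (n + 1) = (∏ i ∈ range n, a (i + 1)) * u (n + 1) := by
  induction n using Nat.twoStepInduction with
  | zero => simp [continuant, hd₀]
  | one =>
    have h : a 1 * u 2 = b 1 * u 1 - c 1 * u 0 := hu 1 le_rfl
    simp only [continuant, hd₀, hd, hg₀, range_one, prod_singleton]
    linear_combination -h
  | more n ih₀ ih₁ =>
    have h : a (n + 2) * u (n + 3) = b (n + 2) * u (n + 2) - c (n + 2) * u (n + 1) :=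
      hu (n + 2) (by omega)
    rw [continuant, ih₁, hd, hg, ih₀, prod_range_succ _ (n + 1), prod_range_succ _ n]
    linear_combination -((∏ i ∈ range n, a (i + 1)) * a (n + 1)) * h

end Continuant

theorem continuant_succ_shift_pos {d g : ℕ → ℝ} (hg : ∀ i, 0 ≤ g i)
    (h : ∀ n, 0 < continuant d g n) (n : ℕ) :
    0 < continuant (fun i => d (i + 1)) (fun i => g (i + 1)) n := by
  induction n with
  | zero => simp [continuant]
  | succ m ih =>
    have hW := continuant_casoratian d g m
    rw [sub_eq_iff_eq_add] at hW
    refine pos_of_mul_pos_left ?_ (h (m + 1)).le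
    rw [hW]
    exact add_pos_of_nonneg_of_pos (prod_nonneg fun i _ => hg i) (mul_pos (h _) ih)

theorem continuant_shift_pos {d g : ℕ → ℝ} (hg : ∀ i, 0 ≤ g i)
    (h : ∀ n, 0 < continuant d g n) (p n : ℕ) :
    0 < continuant (fun i => d (i + p)) (fun i => g (i + p)) n := by
  induction p generalizing n with
  | zero => exact h n
  | succ p ih =>
    simpa only [Nat.add_right_comm _ 1 p, add_assoc] using
      continuant_succ_shift_pos (fun i => hg (i + p)) ih n

theorem exists_aligned_or_separated {n : ℕ} (hn : 2 ≤ n) {r s : Fin n → ℕ}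
    (hr : StrictMono r) (hs : StrictMono s) :
    (∃ p, ∀ i : Fin n, r i = i + p ∧ s i = i + p) ∨
      ∃ t, 0 < t ∧ t < n ∧
        ((∀ i j : Fin n, (i : ℕ) < t → t ≤ (j : ℕ) → r i + 2 ≤ s j) ∨
          ∀ i j : Fin n, (j : ℕ) < t → t ≤ (i : ℕ) → s j + 2 ≤ r i) := by
  obtain ⟨n, rfl⟩ : ∃ m, n = m + 2 := ⟨n - 2, by omega⟩
  have eq_zero {i : Fin (n + 2)} (hi : (i : ℕ) < 1) : i = 0 := Fin.ext (by simpa using hi)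
  have apply_zero_lt {f : Fin (n + 2) → ℕ} (hf : StrictMono f) {i : Fin (n + 2)}
      (hi : 1 ≤ (i : ℕ)) : f 0 < f i :=
    hf (Fin.pos_iff_ne_zero.mpr fun h => by simp [h] at hi)
  rcases lt_trichotomy (r 0) (s 0) with hlt | heq | hgt
  · refine Or.inr ⟨1, one_pos, by omega, Or.inl fun i j hi hj => ?_⟩
    have := apply_zero_lt hs hj
    rw [eq_zero hi]
    omega
  · set P : Fin (n + 2) → Prop := fun i => r i = i + r 0 ∧ s i = i + r 0
    by_cases hall : ∀ i, P i
    · exact Or.inl ⟨_, hall⟩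
    push Not at hall
    -- `t` is the first index at which `r` and `s` leave the common run `r 0, r 0 + 1, …`
    obtain ⟨t, ht : ¬P t, hmin⟩ := WellFounded.has_min wellFounded_lt _ hall
    have hP (i : Fin (n + 2)) (hi : i < t) : P i := by_contra fun h => hmin i h hi
    have ht0 : t ≠ 0 := by rintro rfl; exact ht ⟨by simp, by simp [heq]⟩
    have ht' : (⟨t - 1, by omega⟩ : Fin (n + 2)) < t :=
      Fin.mk_lt_of_lt_val (by have := Fin.pos_iff_ne_zero.mpr ht0; omega)
    obtain ⟨hrt', hst'⟩ : r ⟨t - 1, _⟩ = t - 1 + r 0 ∧ s ⟨t - 1, _⟩ = t - 1 + r 0 :=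
      hP _ ht'
    have := hr ht'
    have := hs ht'
    refine Or.inr ⟨t, by omega, t.isLt, ?_⟩
    by_cases hrt : r t = t + r 0
    · refine Or.inl fun i j hi hj => ?_
      have := (hP i hi).1
      have := hs.monotone (show t ≤ j from hj)
      have : s t ≠ t + r 0 := fun h => ht ⟨hrt, h⟩
      omega
    · refine Or.inr fun i j hj hi => ?_
      have := (hP j hj).2
      have := hr.monotone (show t ≤ i from hi)
      omega
  · refine Or.inr ⟨1, one_pos, by omega, Or.inr fun i j hj hi => ?_⟩
    have := apply_zero_lt hr hi
    rw [eq_zero hj]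
    omega

theorem IsTridiagonal.det_minor_nonneg {N : ℕ → ℕ → ℝ} (hN : IsTridiagonal N)
    (hnn : ∀ i j, 0 ≤ N i j)
    (hcontig : ∀ p n, 0 ≤ (of fun i j : Fin n => N (i + p) (j + p)).det)
    (n : ℕ) {r s : Fin n → ℕ} (hr : StrictMono r) (hs : StrictMono s) :
    0 ≤ (of fun i j => N (r i) (s j)).det := by
  induction n using Nat.strong_induction_on with
  | _ n ih =>
  obtain rfl | rfl | hn : n = 0 ∨ n = 1 ∨ 2 ≤ n := by omega
  · simp
  · simpa [det_fin_one] using hnn _ _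
  rcases exists_aligned_or_separated hn hr hs with ⟨p, hp⟩ | ⟨t, ht0, htn, hsep⟩
  · convert hcontig p n using 3
    ext i j
    simp [(hp i).1, (hp j).2]
  obtain ⟨m, rfl⟩ : ∃ m, n = t + m := ⟨n - t, by omega⟩
  have hdet : (of fun i j => N (r i) (s j)).det =
      (of fun i j => N ((r ∘ Fin.castAdd m) i) ((s ∘ Fin.castAdd m) j)).det *
        (of fun i j => N ((r ∘ Fin.natAdd t) i) ((s ∘ Fin.natAdd t) j)).det := by
    rcases hsep with hsep | hsep
    · exact det_eq_det_mul_det_of_upperRight_eq_zero _ fun i j =>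
        hN _ _ (Or.inl (hsep _ _ (by simp) (by simp)))
    · exact det_eq_det_mul_det_of_lowerLeft_eq_zero _ fun i j =>
        hN _ _ (Or.inr (hsep _ _ (by simp) (by simp)))
  rw [hdet]
  exact mul_nonneg
    (ih t (by omega) (hr.comp (Fin.strictMono_castAdd m)) (hs.comp (Fin.strictMono_castAdd m)))
    (ih m (by omega) (hr.comp (Fin.strictMono_natAdd t)) (hs.comp (Fin.strictMono_natAdd t)))

theorem IsTridiagonal.det_contiguous_pos {N : ℕ → ℕ → ℝ} (hN : IsTridiagonal N)
    (hoff : ∀ i, 0 ≤ N (i + 1) i * N i (i + 1))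
    (hlead : ∀ n, 0 < (of fun i j : Fin n => N i j).det) (p n : ℕ) :
    0 < (of fun i j : Fin n => N (i + p) (j + p)).det := by
  have hNp : IsTridiagonal fun i j => N (i + p) (j + p) := fun i j h => hN _ _ (by omega)
  rw [hNp.det_eq_continuant]
  have := continuant_shift_pos hoff (fun n => hN.det_eq_continuant n ▸ hlead n) p n
  simpa only [Nat.add_right_comm _ 1 p] using this

theorem pos_of_nonneg_of_recurrence {a b c u : ℕ → ℝ}
    (ha : ∀ n : ℕ, 1 ≤ n → 0 < a n) (hc : ∀ n : ℕ, 1 ≤ n → 0 < c n)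
    (hu : ∀ n : ℕ, 1 ≤ n → a n * u (n + 1) = b n * u n - c n * u (n - 1))
    (h₀ : 0 < u 0) (hnn : ∀ n, 0 ≤ u n) (n : ℕ) : 0 < u n := by
  induction n with
  | zero => exact h₀
  | succ m ih =>
    refine (hnn (m + 1)).lt_of_ne' fun hzero => ?_
    have := hu (m + 1) (by omega)
    rw [hzero, Nat.add_sub_cancel] at this
    nlinarith [mul_nonneg (ha (m + 1) (by omega)).le (hnn (m + 2)), hc (m + 1) (by omega)]

theorem positivity_iff_totally_nonneg
    (a b c u : ℕ → ℝ)
    (ha : ∀ n : ℕ, 1 ≤ n → 0 < a n)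
    (hb : ∀ n : ℕ, 1 ≤ n → 0 < b n)
    (hc : ∀ n : ℕ, 1 ≤ n → 0 < c n)
    (hu : ∀ n : ℕ, 1 ≤ n → a n * u (n + 1) = b n * u n - c n * u (n - 1))
    (M : ℕ → ℕ → ℝ)
    (hM : ∀ i j : ℕ, M i j =
      if i = 0 ∧ j = 0 then u 1
      else if i = 0 ∧ j = 1 then c 1
      else if i = 1 ∧ j = 0 then u 0
      else if i = 1 ∧ j = 1 then b 1
      else if i = 1 ∧ j = 2 then c 2
      else if 2 ≤ i ∧ j + 1 = i then a (i - 1)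
      else if 2 ≤ i ∧ j = i then b i
      else if 2 ≤ i ∧ j = i + 1 then c (i + 1)
      else 0) :
    (∀ n : ℕ, 0 < u n) ↔ (0 < u 0 ∧ IsTotallyNonneg M) := by
  have hT : IsTridiagonal M := fun i j h => by rw [hM]; split_ifs <;> first | rfl | omega
  have h₀₀ : M 0 0 = u 1 := by rw [hM]; simp
  have h₁₀ : M 1 0 * M 0 1 = u 0 * c 1 := by rw [hM, hM]; simp
  have hdiag (i : ℕ) : M (i + 1) (i + 1) = b (i + 1) := by
    rw [hM]; rcases i with _ | i <;> simp
  have hoff (i : ℕ) : M (i + 2) (i + 1) * M (i + 1) (i + 2) = a (i + 1) * c (i + 2) := by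
    rw [hM, hM]; rcases i with _ | i <;> simp
  have hlead (n : ℕ) : (of fun i j : Fin (n + 1) => M i j).det =
      (∏ i ∈ range n, a (i + 1)) * u (n + 1) := by
    rw [hT.det_eq_continuant]
    refine continuant_eq_prod_mul hu ?_ ?_ ?_ ?_ n
    exacts [h₀₀, hdiag, h₁₀, hoff]
  have hprod (n : ℕ) : 0 < ∏ i ∈ range n, a (i + 1) := prod_pos fun i _ => ha _ (by omega)
  constructor
  · intro hpos
    have hnn : ∀ i j, 0 ≤ M i j := fun i j => by
      rw [hM]
      split_ifs <;> first
        | exact le_rfl | exact le_of_lt (hpos _) | exact le_of_lt (ha _ (by omega))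
        | exact le_of_lt (hb _ (by omega)) | exact le_of_lt (hc _ (by omega))
    refine ⟨hpos 0, fun k r s hr hs => hT.det_minor_nonneg hnn (fun p n => ?_) _ hr hs⟩
    refine (hT.det_contiguous_pos (fun i => mul_nonneg (hnn _ _) (hnn _ _)) (fun n => ?_) p n).le
    cases n with
    | zero => simp
    | succ n => exact hlead n ▸ mul_pos (hprod n) (hpos _)
  · rintro ⟨h₀, hTN⟩
    refine pos_of_nonneg_of_recurrence ha hc hu h₀ fun n => ?_
    cases n with
    | zero => exact h₀.le
    | succ n =>
      have := hTN n _ _ Fin.val_strictMono Fin.val_strictMono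
      exact nonneg_of_mul_nonneg_right (hlead n ▸ this) (hprod n)
end

section
/- Let a(n), b(n), c(n) be real polynomials in n of the same degree δ with leading coefficients a, b, c respectively, such that a > 0, b > 0, c > 0 and a(n), b(n), c(n) > 0 for all integers n ≥ 1. If a sequence (u_n)_{n≥0} is a solution of a(n)u_{n+1} = b(n)u_n − c(n)u_{n−1} (n ≥ 1) and is eventually sign-definite, then b² ≥ 4ac. -/
/-!
Suppose `b² < 4ac` and `u` keeps a constant sign. The ratios `r n = u (n + 1) / u n` are then
eventually positive and obey the Riccati-type recursion `r (n + 1) = β n - γ n / r n`, where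
`β n → b / a` and `γ n → c / a`. Eventually `4 γ n - β n² > m` for a fixed `m > 0`, so
`x² - β n x + γ n ≥ m / 4`, and since `r (n + 1) < β n` keeps the ratios below some `U`, this gives
`r (n + 1) ≤ r n - m / (4 U)`. A sequence dropping by a fixed amount at every step cannot stay
positive.
-/

open Filter Polynomial Topology

lemma not_eventually_pos_of_eventually_le_sub {x : ℕ → ℝ} {d : ℝ} (hd : 0 < d)
    (h : ∀ᶠ n in atTop, x (n + 1) ≤ x n - d) : ¬ ∀ᶠ n in atTop, 0 < x n := by
  intro hpos
  obtain ⟨n₀, hn₀⟩ := eventually_atTop.mp (h.and hpos)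
  have hdrop : ∀ k : ℕ, x (n₀ + k) ≤ x n₀ - k * d := by
    intro k
    induction k with
    | zero => simp
    | succ k ih =>
      rw [← add_assoc]
      push_cast
      linarith [(hn₀ (n₀ + k) (by omega)).1]
  obtain ⟨k, hk⟩ := exists_nat_gt (x n₀ / d)
  rw [div_lt_iff₀ hd] at hk
  linarith [hdrop k, (hn₀ (n₀ + k) (by omega)).2]

lemma riccati_map_le_sub {x β γ U m : ℝ} (hx : 0 < x) (hxU : x ≤ U) (hm : 0 < m)
    (hdisc : m < 4 * γ - β ^ 2) : β - γ / x ≤ x - m / (4 * U) := by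
  have hquad : m / 4 ≤ x ^ 2 - β * x + γ := by nlinarith [sq_nonneg (2 * x - β)]
  calc β - γ / x = x - (x ^ 2 - β * x + γ) / x := by field_simp; ring
    _ ≤ x - m / 4 / x := by gcongr
    _ ≤ x - m / 4 / U := by gcongr
    _ = x - m / (4 * U) := by rw [div_div]

theorem not_eventually_pos_of_riccati {β γ r : ℕ → ℝ} {b c : ℝ}
    (hβ : Tendsto β atTop (𝓝 b)) (hγ : Tendsto γ atTop (𝓝 c)) (hdisc : b ^ 2 < 4 * c)
    (hr : ∀ᶠ n in atTop, r (n + 1) = β n - γ n / r n) : ¬ ∀ᶠ n in atTop, 0 < r n := by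
  intro hpos
  obtain ⟨m, hm, hmc⟩ : ∃ m, 0 < m ∧ m < 4 * c - b ^ 2 :=
    ⟨(4 * c - b ^ 2) / 2, by linarith, by linarith⟩
  have hγpos : ∀ᶠ n in atTop, 0 < γ n := hγ.eventually_const_lt (by nlinarith [sq_nonneg b])
  have hβU : ∀ᶠ n in atTop, β n < |b| + 1 :=
    hβ.eventually_lt_const (by linarith [le_abs_self b])
  have hdisc' : ∀ᶠ n in atTop, m < 4 * γ n - β n ^ 2 :=
    ((hγ.const_mul 4).sub (hβ.pow 2)).eventually_const_lt hmc
  have hrU : ∀ᶠ n in atTop, r (n + 1) ≤ |b| + 1 := by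
    filter_upwards [hr, hpos, hγpos, hβU] with n hrn hrpos hγn hβn
    rw [hrn]
    linarith [div_pos hγn hrpos]
  have shift {P : ℕ → Prop} (h : ∀ᶠ n in atTop, P n) : ∀ᶠ n in atTop, P (n + 1) :=
    (tendsto_add_atTop_nat 1).eventually h
  refine not_eventually_pos_of_eventually_le_sub (x := fun n ↦ r (n + 1))
    (d := m / (4 * (|b| + 1))) (by positivity) ?_ (shift hpos)
  filter_upwards [shift hr, hrU, shift hpos, shift hdisc'] with n hrn hrnU hrpos hdn
  rw [hrn]
  exact riccati_map_le_sub hrpos hrnU hm hdn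

theorem not_eventually_pos_ratio_of_recurrence {p q s v : ℕ → ℝ} {b c : ℝ}
    (hp : ∀ᶠ n in atTop, p n ≠ 0)
    (hq : Tendsto (fun n ↦ q n / p n) atTop (𝓝 b)) (hs : Tendsto (fun n ↦ s n / p n) atTop (𝓝 c))
    (hdisc : b ^ 2 < 4 * c)
    (hv : ∀ᶠ n in atTop, p n * v (n + 2) = q n * v (n + 1) - s n * v n) :
    ¬ ∀ᶠ n in atTop, 0 < v (n + 1) / v n := by
  intro hpos
  refine not_eventually_pos_of_riccati hq hs hdisc ?_ hpos
  filter_upwards [hp, hv, hpos, (tendsto_add_atTop_nat 1).eventually hpos]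
    with n hpn hvn hr₀ hr₁
  have hv₀ : v n ≠ 0 := fun h ↦ by simp [h] at hr₀
  have hv₁ : v (n + 1) ≠ 0 := fun h ↦ by simp [h] at hr₁
  field_simp
  linear_combination hvn

theorem eventually_sign_definite_necessary_general
    (δ : ℕ) (P Q R : Polynomial ℝ)
    (hPd : P.natDegree = δ) (hQd : Q.natDegree = δ) (hRd : R.natDegree = δ)
    (hPl : 0 < P.leadingCoeff) (hQl : 0 < Q.leadingCoeff) (hRl : 0 < R.leadingCoeff)
    (hPpos : ∀ n : ℕ, 1 ≤ n → 0 < P.eval (n : ℝ))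
    (u : ℕ → ℝ)
    (hu : ∀ n : ℕ, 1 ≤ n →
      P.eval (n : ℝ) * u (n + 1) = Q.eval (n : ℝ) * u n - R.eval (n : ℝ) * u (n - 1))
    (hsd : ∃ N : ℕ, (∀ n : ℕ, N ≤ n → 0 < u n) ∨ (∀ n : ℕ, N ≤ n → u n < 0)) :
    Q.leadingCoeff ^ 2 ≥ 4 * P.leadingCoeff * R.leadingCoeff := by
  have hdeg {F : ℝ[X]} (hF : 0 < F.leadingCoeff) (hFd : F.natDegree = δ) :
      F.degree = P.degree := by
    rw [degree_eq_natDegree (leadingCoeff_ne_zero.mp hF.ne'),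
      degree_eq_natDegree (leadingCoeff_ne_zero.mp hPl.ne'), hFd, hPd]
  have hlim {F : ℝ[X]} (hF : F.degree = P.degree) :
      Tendsto (fun n : ℕ ↦ F.eval ((n + 1 : ℕ) : ℝ) / P.eval ((n + 1 : ℕ) : ℝ)) atTop
        (𝓝 (F.leadingCoeff / P.leadingCoeff)) :=
    (div_tendsto_atTop_leadingCoeff_div_of_degree_eq F P hF).comp
      (tendsto_natCast_atTop_atTop.comp (tendsto_add_atTop_nat 1))
  have hratio : ∀ᶠ n in atTop, 0 < u (n + 1) / u n := by
    obtain ⟨N, hpos | hneg⟩ := hsd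
    · filter_upwards [eventually_ge_atTop N] with n hn
      exact div_pos (hpos _ (by omega)) (hpos _ hn)
    · filter_upwards [eventually_ge_atTop N] with n hn
      exact div_pos_of_neg_of_neg (hneg _ (by omega)) (hneg _ hn)
  by_contra! hlt
  refine not_eventually_pos_ratio_of_recurrence (p := fun n ↦ P.eval ((n + 1 : ℕ) : ℝ))
    (.of_forall fun n ↦ (hPpos (n + 1) (by omega)).ne') (hlim (hdeg hQl hQd))
    (hlim (hdeg hRl hRd)) ?_ (.of_forall fun n ↦ hu (n + 1) (by omega)) hratio
  rw [div_pow, mul_div_assoc', div_lt_div_iff₀ (by positivity) hPl]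
  nlinarith

theorem eventually_sign_definite_necessary
    (δ : ℕ) (P Q R : Polynomial ℝ)
    (hPd : P.natDegree = δ) (hQd : Q.natDegree = δ) (hRd : R.natDegree = δ)
    (hPl : 0 < P.leadingCoeff) (hQl : 0 < Q.leadingCoeff) (hRl : 0 < R.leadingCoeff)
    (hPpos : ∀ n : ℕ, 1 ≤ n → 0 < P.eval (n : ℝ))
    (hQpos : ∀ n : ℕ, 1 ≤ n → 0 < Q.eval (n : ℝ))
    (hRpos : ∀ n : ℕ, 1 ≤ n → 0 < R.eval (n : ℝ))
    (u : ℕ → ℝ)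
    (hu : ∀ n : ℕ, 1 ≤ n →
      P.eval (n : ℝ) * u (n + 1) = Q.eval (n : ℝ) * u n - R.eval (n : ℝ) * u (n - 1))
    (hsd : ∃ N : ℕ, (∀ n : ℕ, N ≤ n → 0 < u n) ∨ (∀ n : ℕ, N ≤ n → u n < 0)) :
    Q.leadingCoeff ^ 2 ≥ 4 * P.leadingCoeff * R.leadingCoeff :=
  eventually_sign_definite_necessary_general δ P Q R hPd hQd hRd hPl hQl hRl hPpos u hu hsd
end

section
/- Let a(n), b(n), c(n) be real polynomials in n of the same degree δ with leading coefficients a, b, c respectively, such that a > 0, b > 0, c > 0 and a(n), b(n), c(n) > 0 for all integers n ≥ 1. Suppose (u_n)_{n≥0} is a solution of a(n)u_{n+1} = b(n)u_n − c(n)u_{n−1} (n ≥ 1) with u_n > 0 for all n ≥ 0. Then there exists a real number ρ₀ > 0 such that u_1 ≥ ρ₀ u_0 and the solution (u*_n)_{n≥0} of the same difference equation determined by u*_0 = 1 and u*_1 = ρ₀ satisfies u*_n > 0 for all n ≥ 0 and is a minimal solution. -/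
/-!
By Abel's identity the Casoratian `v_n w_{n+1} - v_{n+1} w_n` of two solutions is its initial
value `C` times `Π_n = ∏_{j ≤ n} c(j)/a(j)`, so for a positive solution `v` and any solution `w`,
`w_n / v_n = w_0 / v_0 + C ∑_{k<n} Π_k / (v_k v_{k+1})`, where `C ≠ 0` unless `w` is a multiple of
`v`. Hence `v` is minimal as soon as `∑ Π_k / (v_k v_{k+1})` diverges. If this series converges
for the given positive solution `u`, with tails `τ_n`, then `u_n τ_n` is again a positive solution
(reduction of order), for which the series telescopes to `1/τ_n - 1/τ_0 → ∞`; and `ρ₀ ≤ u_1/u_0`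
because `τ_1 ≤ τ_0`.
-/

open Filter Finset Topology

namespace ThreeTermRecurrence

/-- Indexed from `n + 1`, so that no truncated subtraction `n - 1` occurs. -/
def IsSolution (a b c x : ℕ → ℝ) : Prop :=
  ∀ n, a (n + 1) * x (n + 2) = b (n + 1) * x (n + 1) - c (n + 1) * x n

def casoratian (x y : ℕ → ℝ) (n : ℕ) : ℝ := x n * y (n + 1) - x (n + 1) * y n

noncomputable def casoratianFactor (a c : ℕ → ℝ) (n : ℕ) : ℝ :=
  ∏ j ∈ range n, c (j + 1) / a (j + 1)

def IsMinimal (a b c v : ℕ → ℝ) : Prop :=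
  ∀ w, IsSolution a b c w → (¬ ∃ t : ℝ, ∀ n, w n = t * v n) →
    Tendsto (fun n => v n / w n) atTop (𝓝 0)

variable {a b c u v w x y : ℕ → ℝ}

theorem isSolution_iff_forall_one_le :
    IsSolution a b c x ↔ ∀ n, 1 ≤ n → a n * x (n + 1) = b n * x n - c n * x (n - 1) :=
  ⟨fun h n hn => by obtain ⟨m, rfl⟩ := Nat.exists_eq_add_of_le' hn; simpa using h m,
    fun h n => by simpa using h (n + 1) n.succ_pos⟩

theorem casoratianFactor_succ (n : ℕ) :
    casoratianFactor a c (n + 1) = casoratianFactor a c n * (c (n + 1) / a (n + 1)) :=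
  prod_range_succ _ _

theorem casoratianFactor_pos (ha : ∀ n, 0 < a (n + 1)) (hc : ∀ n, 0 < c (n + 1)) (n : ℕ) :
    0 < casoratianFactor a c n :=
  prod_pos fun j _ => div_pos (hc j) (ha j)

namespace IsSolution

theorem const_mul (hx : IsSolution a b c x) (t : ℝ) : IsSolution a b c fun n => t * x n :=
  fun n => by linear_combination t * hx n

theorem eq (ha : ∀ n, a (n + 1) ≠ 0) (hx : IsSolution a b c x) (hy : IsSolution a b c y)
    (h0 : x 0 = y 0) (h1 : x 1 = y 1) : x = y := by
  have h : ∀ n, x n = y n ∧ x (n + 1) = y (n + 1) := by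
    intro n
    induction n with
    | zero => exact ⟨h0, h1⟩
    | succ m ih =>
      refine ⟨ih.2, mul_left_cancel₀ (ha m) ?_⟩
      rw [hx m, hy m, ih.1, ih.2]
  exact funext fun n => (h n).1

theorem casoratian_eq (ha : ∀ n, a (n + 1) ≠ 0) (hx : IsSolution a b c x)
    (hy : IsSolution a b c y) (n : ℕ) :
    casoratian x y n = casoratian x y 0 * casoratianFactor a c n := by
  induction n with
  | zero => simp [casoratianFactor]
  | succ m ih =>
    have hstep : a (m + 1) * casoratian x y (m + 1) = c (m + 1) * casoratian x y m := by
      unfold casoratian; linear_combination x (m + 1) * hy m - y (m + 1) * hx m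
    rw [casoratianFactor_succ, ← mul_assoc, ← ih]
    field_simp [ha m]
    linear_combination hstep

theorem div_eq_add_sum (ha : ∀ n, a (n + 1) ≠ 0) (hv : IsSolution a b c v)
    (hw : IsSolution a b c w) (hv0 : ∀ n, v n ≠ 0) (n : ℕ) :
    w n / v n = w 0 / v 0 +
      casoratian v w 0 * ∑ k ∈ range n, casoratianFactor a c k / (v k * v (k + 1)) := by
  induction n with
  | zero => simp
  | succ m ih =>
    have hW := hv.casoratian_eq ha hw m
    rw [sum_range_succ, mul_add, ← add_assoc, ← ih]
    unfold casoratian at hW ⊢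
    field_simp [hv0 m, hv0 (m + 1)]
    linear_combination hW

theorem exists_eq_const_mul_of_casoratian_eq_zero (ha : ∀ n, a (n + 1) ≠ 0)
    (hv : IsSolution a b c v) (hw : IsSolution a b c w) (hv0 : v 0 ≠ 0)
    (h : casoratian v w 0 = 0) : ∃ t : ℝ, ∀ n, w n = t * v n := by
  refine ⟨w 0 / v 0, congrFun (hw.eq ha (hv.const_mul _) ?_ ?_)⟩
  · field_simp
  · unfold casoratian at h
    field_simp
    linear_combination h

theorem isMinimal_of_tendsto (ha : ∀ n, a (n + 1) ≠ 0) (hv : IsSolution a b c v)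
    (hv0 : ∀ n, v n ≠ 0)
    (hS : Tendsto (fun n => ∑ k ∈ range n, casoratianFactor a c k / (v k * v (k + 1)))
      atTop atTop) :
    IsMinimal a b c v := by
  intro w hw hnw
  set S := fun n => ∑ k ∈ range n, casoratianFactor a c k / (v k * v (k + 1))
  set C := casoratian v w 0
  have hC : 0 < |C| :=
    abs_pos.mpr fun h => hnw (hv.exists_eq_const_mul_of_casoratian_eq_zero ha hw (hv0 0) h)
  have hlower : ∀ n, |C| * S n - |w 0 / v 0| ≤ |w n / v n| := fun n => by
    rw [hv.div_eq_add_sum ha hw hv0 n]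
    have := abs_sub_abs_le_abs_sub (C * S n) (-(w 0 / v 0))
    rw [abs_neg, sub_neg_eq_add, add_comm, abs_mul] at this
    nlinarith [le_abs_self (S n)]
  have hratio : Tendsto (fun n => |w n / v n|) atTop atTop :=
    tendsto_atTop_mono hlower (tendsto_atTop_add_const_right _ _ (hS.const_mul_atTop hC))
  rw [tendsto_zero_iff_abs_tendsto_zero]
  exact hratio.inv_tendsto_atTop.congr fun n => by
    simp only [Pi.inv_apply, Function.comp_apply]; rw [← abs_inv, inv_div]

theorem of_casoratian_eq (ha : ∀ n, a (n + 1) ≠ 0) (hx : IsSolution a b c x)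
    (hx0 : ∀ n, x (n + 1) ≠ 0) (C : ℝ)
    (hy : ∀ n, casoratian x y n = C * casoratianFactor a c n) : IsSolution a b c y := by
  intro n
  have hfactor : a (n + 1) * casoratianFactor a c (n + 1) = c (n + 1) * casoratianFactor a c n := by
    rw [casoratianFactor_succ]; field_simp [ha n]
  have h1 := hy n
  have h2 := hy (n + 1)
  unfold casoratian at h1 h2
  apply mul_left_cancel₀ (hx0 n)
  linear_combination a (n + 1) * h2 + y (n + 1) * hx n - c (n + 1) * h1 + C * hfactor

/-- Reduction of order. -/
theorem mul_tail (ha : ∀ n, a (n + 1) ≠ 0) (hu : IsSolution a b c u) (hu0 : ∀ n, u n ≠ 0)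
    {τ : ℕ → ℝ} (hτpos : ∀ n, 0 < τ n) (hτ0 : Tendsto τ atTop (𝓝 0))
    (hτ : ∀ n, τ n - τ (n + 1) = casoratianFactor a c n / (u n * u (n + 1))) :
    IsSolution a b c (fun n => u n * τ n) ∧ IsMinimal a b c (fun n => u n * τ n) := by
  have hcas : ∀ n, casoratian u (fun n => u n * τ n) n = -1 * casoratianFactor a c n := by
    intro n
    have h := hτ n
    rw [eq_div_iff (mul_ne_zero (hu0 n) (hu0 (n + 1)))] at h
    unfold casoratian
    linear_combination -h
  have hsol := hu.of_casoratian_eq ha (fun n => hu0 (n + 1)) (-1) hcas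
  refine ⟨hsol, hsol.isMinimal_of_tendsto ha (fun n => mul_ne_zero (hu0 n) (hτpos n).ne') ?_⟩
  have hterm : ∀ k, casoratianFactor a c k / (u k * τ k * (u (k + 1) * τ (k + 1)))
      = (τ (k + 1))⁻¹ - (τ k)⁻¹ := fun k => by
    have h := hτ k
    rw [eq_div_iff (mul_ne_zero (hu0 k) (hu0 (k + 1)))] at h
    field_simp [hu0 k, hu0 (k + 1), (hτpos k).ne', (hτpos (k + 1)).ne']
    linear_combination -h
  have hsum : ∀ n, ∑ k ∈ range n, casoratianFactor a c k / (u k * τ k * (u (k + 1) * τ (k + 1)))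
      = (τ n)⁻¹ - (τ 0)⁻¹ := fun n => by
    rw [sum_congr rfl fun k _ => hterm k]
    exact sum_range_sub (fun k => (τ k)⁻¹) n
  simp only [hsum, sub_eq_add_neg]
  exact tendsto_atTop_add_const_right _ _
    (tendsto_nhdsWithin_iff.mpr ⟨hτ0, .of_forall hτpos⟩).inv_tendsto_nhdsGT_zero

theorem exists_isMinimal (ha : ∀ n, 0 < a (n + 1)) (hc : ∀ n, 0 < c (n + 1))
    (hu : IsSolution a b c u) (hupos : ∀ n, 0 < u n) :
    ∃ v, IsSolution a b c v ∧ (∀ n, 0 < v n) ∧ v 1 * u 0 ≤ u 1 * v 0 ∧ IsMinimal a b c v := by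
  have ha0 : ∀ n, a (n + 1) ≠ 0 := fun n => (ha n).ne'
  have hu0 : ∀ n, u n ≠ 0 := fun n => (hupos n).ne'
  set σ := fun n => casoratianFactor a c n / (u n * u (n + 1))
  have hσpos : ∀ n, 0 < σ n := fun n =>
    div_pos (casoratianFactor_pos ha hc n) (mul_pos (hupos n) (hupos (n + 1)))
  by_cases hσ : Summable σ
  · set τ := fun n => ∑' k, σ (k + n)
    have hτ : ∀ n, τ n = σ n + τ (n + 1) := fun n => by
      simp only [τ, ((summable_nat_add_iff n).mpr hσ).tsum_eq_zero_add, zero_add,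
        add_right_comm _ 1 n, add_assoc]
    have hτpos : ∀ n, 0 < τ n := fun n => by
      have : 0 ≤ τ (n + 1) := tsum_nonneg fun k => (hσpos _).le
      linarith [hτ n, hσpos n]
    obtain ⟨hsol, hmin⟩ := hu.mul_tail ha0 hu0 hτpos (tendsto_sum_nat_add σ)
      fun n => by rw [hτ n]; ring
    refine ⟨_, hsol, fun n => mul_pos (hupos n) (hτpos n), ?_, hmin⟩
    have : τ 1 ≤ τ 0 := by linarith [hτ 0, hσpos 0]
    have := mul_le_mul_of_nonneg_left this (mul_pos (hupos 1) (hupos 0)).le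
    linarith
  · refine ⟨u, hu, hupos, le_rfl, hu.isMinimal_of_tendsto ha0 hu0 ?_⟩
    exact (not_summable_iff_tendsto_nat_atTop_of_nonneg fun n => (hσpos n).le).mp hσ

end IsSolution

theorem IsMinimal.const_mul (hv : IsMinimal a b c v) {s : ℝ} (hs : s ≠ 0) :
    IsMinimal a b c fun n => s * v n := by
  intro w hw hnw
  have hnw' : ¬ ∃ t : ℝ, ∀ n, w n = t * v n := fun ⟨t, ht⟩ =>
    hnw ⟨t / s, fun n => by rw [ht n]; field_simp⟩
  simpa only [mul_div_assoc, mul_zero] using (hv w hw hnw').const_mul s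

end ThreeTermRecurrence

open ThreeTermRecurrence in
theorem positive_solution_gives_minimal_solution_general
    (P Q R : Polynomial ℝ)
    (hPpos : ∀ n : ℕ, 1 ≤ n → 0 < P.eval (n : ℝ))
    (hRpos : ∀ n : ℕ, 1 ≤ n → 0 < R.eval (n : ℝ))
    (u : ℕ → ℝ)
    (hu : ∀ n : ℕ, 1 ≤ n →
      P.eval (n : ℝ) * u (n + 1) = Q.eval (n : ℝ) * u n - R.eval (n : ℝ) * u (n - 1))
    (hupos : ∀ n : ℕ, 0 < u n) :
    ∃ ρ₀ : ℝ, 0 < ρ₀ ∧ u 1 ≥ ρ₀ * u 0 ∧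
      ∀ v : ℕ → ℝ,
        (∀ n : ℕ, 1 ≤ n →
          P.eval (n : ℝ) * v (n + 1) = Q.eval (n : ℝ) * v n - R.eval (n : ℝ) * v (n - 1)) →
        v 0 = 1 → v 1 = ρ₀ →
        (∀ n : ℕ, 0 < v n) ∧
        (∀ w : ℕ → ℝ,
          (∀ n : ℕ, 1 ≤ n →
            P.eval (n : ℝ) * w (n + 1) = Q.eval (n : ℝ) * w n - R.eval (n : ℝ) * w (n - 1)) →
          (¬ ∃ t : ℝ, ∀ n : ℕ, w n = t * v n) →
          Filter.Tendsto (fun n : ℕ => v n / w n) Filter.atTop (nhds 0)) := by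
  set a := fun n : ℕ => P.eval (n : ℝ)
  set b := fun n : ℕ => Q.eval (n : ℝ)
  set c := fun n : ℕ => R.eval (n : ℝ)
  have ha : ∀ n, 0 < a (n + 1) := fun n => hPpos _ n.succ_pos
  have hc : ∀ n, 0 < c (n + 1) := fun n => hRpos _ n.succ_pos
  obtain ⟨V, hV, hVpos, hVu, hVmin⟩ :=
    (isSolution_iff_forall_one_le.mpr hu).exists_isMinimal (b := b) ha hc hupos
  refine ⟨V 1 / V 0, div_pos (hVpos 1) (hVpos 0), ?_, fun v hv hv0 hv1 => ?_⟩
  · rw [ge_iff_le, div_mul_eq_mul_div, div_le_iff₀ (hVpos 0)]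
    exact hVu
  have hvV : v = fun n => (V 0)⁻¹ * V n :=
    (isSolution_iff_forall_one_le.mpr hv).eq (fun n => (ha n).ne') (hV.const_mul _)
      (by simp [hv0, (hVpos 0).ne']) (by rw [hv1, div_eq_inv_mul])
  subst hvV
  exact ⟨fun n => mul_pos (inv_pos.mpr (hVpos 0)) (hVpos n), fun w hw =>
    hVmin.const_mul (inv_ne_zero (hVpos 0).ne') w (isSolution_iff_forall_one_le.mpr hw)⟩

theorem positive_solution_gives_minimal_solution
    (δ : ℕ) (P Q R : Polynomial ℝ)
    (hPd : P.natDegree = δ) (hQd : Q.natDegree = δ) (hRd : R.natDegree = δ)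
    (hPl : 0 < P.leadingCoeff) (hQl : 0 < Q.leadingCoeff) (hRl : 0 < R.leadingCoeff)
    (hPpos : ∀ n : ℕ, 1 ≤ n → 0 < P.eval (n : ℝ))
    (hQpos : ∀ n : ℕ, 1 ≤ n → 0 < Q.eval (n : ℝ))
    (hRpos : ∀ n : ℕ, 1 ≤ n → 0 < R.eval (n : ℝ))
    (u : ℕ → ℝ)
    (hu : ∀ n : ℕ, 1 ≤ n →
      P.eval (n : ℝ) * u (n + 1) = Q.eval (n : ℝ) * u n - R.eval (n : ℝ) * u (n - 1))
    (hupos : ∀ n : ℕ, 0 < u n) :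
    ∃ ρ₀ : ℝ, 0 < ρ₀ ∧ u 1 ≥ ρ₀ * u 0 ∧
      ∀ v : ℕ → ℝ,
        (∀ n : ℕ, 1 ≤ n →
          P.eval (n : ℝ) * v (n + 1) = Q.eval (n : ℝ) * v n - R.eval (n : ℝ) * v (n - 1)) →
        v 0 = 1 → v 1 = ρ₀ →
        (∀ n : ℕ, 0 < v n) ∧
        (∀ w : ℕ → ℝ,
          (∀ n : ℕ, 1 ≤ n →
            P.eval (n : ℝ) * w (n + 1) = Q.eval (n : ℝ) * w n - R.eval (n : ℝ) * w (n - 1)) →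
          (¬ ∃ t : ℝ, ∀ n : ℕ, w n = t * v n) →
          Filter.Tendsto (fun n : ℕ => v n / w n) Filter.atTop (nhds 0)) :=
  positive_solution_gives_minimal_solution_general P Q R hPpos hRpos u hu hupos
end

section
/- Let a(n), b(n), c(n) be real polynomials in n of the same degree δ with leading coefficients a, b, c respectively, such that a > 0, b > 0, c > 0 and a(n), b(n), c(n) > 0 for all integers n ≥ 1. If b² > 4ac, then every nontrivial solution (u_n)_{n≥0} of a(n)u_{n+1} = b(n)u_n − c(n)u_{n−1} (n ≥ 1) is eventually sign-definite. -/
/-!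
Choose `t > 0` with `a t² - b t + c < 0` (possible since `b² > 4ac`), e.g. `t = b / 2a`. Then
`a(n) t² + c(n) ≤ b(n) t` for all large `n`, and this makes the ratio bound `u_{n+1} ≥ t u_n` on a
positive solution propagate: once a solution crosses from `≤ 0` to `> 0` late enough, it stays
positive, and dually for `-u`. A solution that never crosses late has no late zeros (two consecutive
zeros force `u = 0`), so its sign is eventually constant.
-/

open Filter Polynomial

lemma exists_pos_mul_sq_add_lt_mul {a b c : ℝ} (ha : 0 < a) (hb : 0 < b) (hdisc : 4 * a * c < b ^ 2) :
    ∃ t > 0, a * t ^ 2 + c < b * t := by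
  refine ⟨b / (2 * a), by positivity, ?_⟩
  have key : b * (b / (2 * a)) - a * (b / (2 * a)) ^ 2 - c = (b ^ 2 - 4 * a * c) / (4 * a) := by
    field_simp
    ring
  have : 0 < (b ^ 2 - 4 * a * c) / (4 * a) := div_pos (by linarith) (by linarith)
  linarith

namespace Polynomial

lemma eventually_pos_of_leadingCoeff_pos {𝕜 : Type*} [NormedField 𝕜] [LinearOrder 𝕜]
    [IsStrictOrderedRing 𝕜] [OrderTopology 𝕜] {S : 𝕜[X]} (hS : 0 < S.leadingCoeff) :
    ∀ᶠ x in atTop, 0 < S.eval x :=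
  S.isEquivalent_atTop_lead.eventually_pos <|
    (eventually_gt_atTop 0).mono fun _ hx => mul_pos hS (pow_pos hx _)

lemma eventually_eval_mul_sq_add_lt {δ : ℕ} {P Q R : ℝ[X]}
    (hP : P.natDegree ≤ δ) (hQ : Q.natDegree ≤ δ) (hR : R.natDegree ≤ δ) {t : ℝ}
    (h : P.coeff δ * t ^ 2 + R.coeff δ < Q.coeff δ * t) :
    ∀ᶠ x in atTop, P.eval x * t ^ 2 + R.eval x < Q.eval x * t := by
  set S := C t * Q - C (t ^ 2) * P - R
  have hSdeg : S.natDegree ≤ δ :=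
    (natDegree_sub_le_of_le (natDegree_sub_le_of_le ((natDegree_C_mul_le _ _).trans hQ)
      ((natDegree_C_mul_le _ _).trans hP)) hR).trans (by simp)
  have hScoeff : S.coeff δ = t * Q.coeff δ - t ^ 2 * P.coeff δ - R.coeff δ := by
    simp only [S, coeff_sub, coeff_C_mul]
  have hSpos : 0 < S.coeff δ := by rw [hScoeff]; linarith
  have hSlead : S.leadingCoeff = S.coeff δ := by
    rw [leadingCoeff, natDegree_eq_of_le_of_coeff_ne_zero hSdeg hSpos.ne']
  filter_upwards [eventually_pos_of_leadingCoeff_pos (hSlead ▸ hSpos)] with x hx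
  simp only [S, eval_sub, eval_mul, eval_C] at hx
  linarith

end Polynomial

/-- `p n * u (n + 1) = q n * u n - r n * u (n - 1)` for `n ≥ 1`, shifted by one so that no
truncated subtraction occurs. -/
def IsSolution (p q r u : ℕ → ℝ) : Prop :=
  ∀ n, p (n + 1) * u (n + 2) = q (n + 1) * u (n + 1) - r (n + 1) * u n

namespace IsSolution

variable {p q r u : ℕ → ℝ}

lemma neg (hu : IsSolution p q r u) : IsSolution p q r (-u) := fun n => by
  simp only [Pi.neg_apply, mul_neg, hu n]
  ring

lemma eq_zero_of_consecutive_zeros (hu : IsSolution p q r u) (hp : ∀ n, p (n + 1) ≠ 0)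
    (hr : ∀ n, r (n + 1) ≠ 0) {k : ℕ} (h₀ : u k = 0) (h₁ : u (k + 1) = 0) : u = 0 := by
  have step : ∀ m, u m = 0 ∧ u (m + 1) = 0 ↔ u (m + 1) = 0 ∧ u (m + 2) = 0 := fun m => by
    have hm := hu m
    constructor
    · rintro ⟨hm₀, hm₁⟩
      rw [hm₀, hm₁] at hm
      exact ⟨hm₁, by simpa [hp m] using hm⟩
    · rintro ⟨hm₁, hm₂⟩
      rw [hm₁, hm₂] at hm
      exact ⟨by simpa [hr m] using hm, hm₁⟩
  have const : ∀ m, u m = 0 ∧ u (m + 1) = 0 ↔ u 0 = 0 ∧ u 1 = 0 := fun m => by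
    induction m with
    | zero => rfl
    | succ m ih => exact (step m).symm.trans ih
  funext m
  exact ((const m).mpr ((const k).mp ⟨h₀, h₁⟩)).1

lemma ratio_step (hu : IsSolution p q r u) {t : ℝ} (ht : 0 < t) {n : ℕ} (hp : 0 < p (n + 1))
    (hr : 0 ≤ r (n + 1)) (hpqr : p (n + 1) * t ^ 2 + r (n + 1) ≤ q (n + 1) * t)
    (hpos : 0 < u (n + 1)) (hratio : t * u n ≤ u (n + 1)) : t * u (n + 1) ≤ u (n + 2) := by
  have key : p (n + 1) * t * (t * u (n + 1)) ≤ p (n + 1) * t * u (n + 2) := by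
    have hrec : p (n + 1) * t * u (n + 2) = q (n + 1) * t * u (n + 1) - r (n + 1) * (t * u n) := by
      linear_combination t * hu n
    rw [hrec]
    nlinarith [mul_le_mul_of_nonneg_left hratio hr, mul_le_mul_of_nonneg_right hpqr hpos.le]
  exact le_of_mul_le_mul_left key (mul_pos hp ht)

lemma pos_of_upcrossing (hu : IsSolution p q r u) (hp : ∀ n, 0 < p (n + 1))
    (hr : ∀ n, 0 ≤ r (n + 1)) {t : ℝ} (ht : 0 < t) {M : ℕ}
    (hpqr : ∀ n ≥ M, p n * t ^ 2 + r n ≤ q n * t) {n : ℕ} (hn : M ≤ n) (h₀ : u n ≤ 0)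
    (h₁ : 0 < u (n + 1)) : ∀ m > n, 0 < u m := by
  have inv : ∀ m ≥ n, 0 < u (m + 1) ∧ t * u m ≤ u (m + 1) := fun m hm => by
    induction m, hm using Nat.le_induction with
    | base => exact ⟨h₁, (mul_nonpos_of_nonneg_of_nonpos ht.le h₀).trans h₁.le⟩
    | succ m hm ih =>
      have hratio := hu.ratio_step ht (hp m) (hr m) (hpqr (m + 1) (by omega)) ih.1 ih.2
      exact ⟨(mul_pos ht ih.1).trans_le hratio, hratio⟩
  intro m hm
  obtain ⟨k, rfl⟩ := Nat.exists_eq_add_of_lt hm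
  exact (inv (n + k) (by omega)).1

theorem eventually_sign_definite (hu : IsSolution p q r u) (hne : u ≠ 0)
    (hp : ∀ n, 0 < p (n + 1)) (hr : ∀ n, 0 < r (n + 1)) {t : ℝ} (ht : 0 < t)
    (hpqr : ∀ᶠ n in atTop, p n * t ^ 2 + r n ≤ q n * t) :
    ∃ N, (∀ n ≥ N, 0 < u n) ∨ (∀ n ≥ N, u n < 0) := by
  obtain ⟨M, hM⟩ := eventually_atTop.mp hpqr
  by_cases hup : ∃ n ≥ M, u n ≤ 0 ∧ 0 < u (n + 1)
  · obtain ⟨n, hn, h₀, h₁⟩ := hup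
    exact ⟨n + 1, .inl fun m hm => hu.pos_of_upcrossing hp (fun k => (hr k).le) ht hM hn h₀ h₁ m hm⟩
  by_cases hdown : ∃ n ≥ M, 0 ≤ u n ∧ u (n + 1) < 0
  · obtain ⟨n, hn, h₀, h₁⟩ := hdown
    refine ⟨n + 1, .inr fun m hm => neg_pos.mp ?_⟩
    exact hu.neg.pos_of_upcrossing hp (fun k => (hr k).le) ht hM hn (neg_nonpos.mpr h₀)
      (neg_pos.mpr h₁) m hm
  push Not at hup hdown
  have hz : ∀ n ≥ M, u n ≠ 0 := fun n hn h₀ =>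
    hne <| hu.eq_zero_of_consecutive_zeros (fun k => (hp k).ne') (fun k => (hr k).ne') h₀
      (le_antisymm (hup n hn h₀.le) (hdown n hn h₀.ge))
  rcases (hz M le_rfl).lt_or_gt with hneg | hpos
  · refine ⟨M, .inr fun n hn => ?_⟩
    induction n, hn using Nat.le_induction with
    | base => exact hneg
    | succ n hn ih => exact (hup n hn ih.le).lt_of_ne (hz (n + 1) (by omega))
  · refine ⟨M, .inl fun n hn => ?_⟩
    induction n, hn using Nat.le_induction with
    | base => exact hpos
    | succ n hn ih => exact (hdown n hn ih.le).lt_of_ne' (hz (n + 1) (by omega))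

end IsSolution

theorem eventually_sign_definite_sufficient_general
    (δ : ℕ) (P Q R : Polynomial ℝ)
    (hPd : P.natDegree = δ) (hQd : Q.natDegree = δ) (hRd : R.natDegree = δ)
    (hPl : 0 < P.leadingCoeff) (hQl : 0 < Q.leadingCoeff)
    (hPpos : ∀ n : ℕ, 1 ≤ n → 0 < P.eval (n : ℝ))
    (hRpos : ∀ n : ℕ, 1 ≤ n → 0 < R.eval (n : ℝ))
    (hdisc : Q.leadingCoeff ^ 2 > 4 * P.leadingCoeff * R.leadingCoeff)
    (u : ℕ → ℝ)
    (hu : ∀ n : ℕ, 1 ≤ n →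
      P.eval (n : ℝ) * u (n + 1) = Q.eval (n : ℝ) * u n - R.eval (n : ℝ) * u (n - 1))
    (hnontriv : ∃ n : ℕ, u n ≠ 0) :
    ∃ N : ℕ, (∀ n : ℕ, N ≤ n → 0 < u n) ∨ (∀ n : ℕ, N ≤ n → u n < 0) := by
  obtain ⟨t, ht, hquad⟩ := exists_pos_mul_sq_add_lt_mul hPl hQl hdisc
  have hcoeff : P.coeff δ * t ^ 2 + R.coeff δ < Q.coeff δ * t := by
    rwa [← hPd, coeff_natDegree, hPd, ← hQd, coeff_natDegree, hQd, ← hRd, coeff_natDegree]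
  have hsol : IsSolution (fun n => P.eval (n : ℝ)) (fun n => Q.eval (n : ℝ))
      (fun n => R.eval (n : ℝ)) u := fun n => by
    simpa using hu (n + 1) (by omega)
  exact hsol.eventually_sign_definite (Function.ne_iff.mpr hnontriv) (fun n => hPpos _ (by omega))
    (fun n => hRpos _ (by omega)) ht <| (tendsto_natCast_atTop_atTop.eventually
      (eventually_eval_mul_sq_add_lt hPd.le hQd.le hRd.le hcoeff)).mono fun _ => le_of_lt

theorem eventually_sign_definite_sufficient
    (δ : ℕ) (P Q R : Polynomial ℝ)
    (hPd : P.natDegree = δ) (hQd : Q.natDegree = δ) (hRd : R.natDegree = δ)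
    (hPl : 0 < P.leadingCoeff) (hQl : 0 < Q.leadingCoeff) (hRl : 0 < R.leadingCoeff)
    (hPpos : ∀ n : ℕ, 1 ≤ n → 0 < P.eval (n : ℝ))
    (hQpos : ∀ n : ℕ, 1 ≤ n → 0 < Q.eval (n : ℝ))
    (hRpos : ∀ n : ℕ, 1 ≤ n → 0 < R.eval (n : ℝ))
    (hdisc : Q.leadingCoeff ^ 2 > 4 * P.leadingCoeff * R.leadingCoeff)
    (u : ℕ → ℝ)
    (hu : ∀ n : ℕ, 1 ≤ n →
      P.eval (n : ℝ) * u (n + 1) = Q.eval (n : ℝ) * u n - R.eval (n : ℝ) * u (n - 1))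
    (hnontriv : ∃ n : ℕ, u n ≠ 0) :
    ∃ N : ℕ, (∀ n : ℕ, N ≤ n → 0 < u n) ∨ (∀ n : ℕ, N ≤ n → u n < 0) :=
  eventually_sign_definite_sufficient_general δ P Q R hPd hQd hRd hPl hQl hPpos hRpos hdisc u hu
    hnontriv
end

section
/- Let a(n), b(n), c(n) be real functions with a(n), b(n), c(n) > 0 for all integers n ≥ 1, and let (u_n)_{n≥0} be a solution of a(n)u_{n+1} = b(n)u_n − c(n)u_{n−1} (n ≥ 1). Define Q_n(λ) = a(n)λ² − b(n)λ + c(n). If there exist a positive real number λ₀ and an integer m ≥ 0 such that Q_n(λ₀) ≤ 0 for all n ≥ max(m,1) and u_{m+1} ≥ λ₀ u_m > 0, then u_n > 0 for all n ≥ m. -/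
/-!
If `λ u_n ≤ u_{n+1}` with `u_{n+1} > 0`, the recurrence and `Q_{n+1}(λ) ≤ 0` give
`λ a u_{n+2} = λ b u_{n+1} - c λ u_n ≥ (b λ - c) u_{n+1} ≥ a λ² u_{n+1}`, so the ratio bound
`u_{n+2} ≥ λ u_{n+1}` propagates; positivity follows along the way since `λ > 0`.
-/

theorem mul_le_of_quadratic_nonpos {a b c l x y z : ℝ} (ha : 0 < a) (hc : 0 ≤ c) (hl : 0 < l)
    (hQ : a * l ^ 2 - b * l + c ≤ 0) (hrec : a * z = b * y - c * x) (hy : 0 ≤ y)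
    (hxy : l * x ≤ y) : l * y ≤ z := by
  have hQy : a * l ^ 2 * y ≤ (b * l - c) * y := mul_le_mul_of_nonneg_right (by linarith) hy
  have hcx : c * (l * x) ≤ c * y := mul_le_mul_of_nonneg_left hxy hc
  have : l * (a * (l * y)) ≤ l * (a * z) := by
    rw [hrec]
    nlinarith
  exact le_of_mul_le_mul_left (le_of_mul_le_mul_left this hl) ha

theorem positivity_criterion_general
    (a b c u : ℕ → ℝ)
    (ha : ∀ n : ℕ, 1 ≤ n → 0 < a n)
    (hc : ∀ n : ℕ, 1 ≤ n → 0 < c n)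
    (hu : ∀ n : ℕ, 1 ≤ n → a n * u (n + 1) = b n * u n - c n * u (n - 1))
    (lam0 : ℝ) (hlam0 : 0 < lam0) (m : ℕ)
    (hQ : ∀ n : ℕ, max m 1 ≤ n → a n * lam0 ^ 2 - b n * lam0 + c n ≤ 0)
    (hstep : u (m + 1) ≥ lam0 * u m) (hpos : 0 < lam0 * u m) :
    ∀ n : ℕ, m ≤ n → 0 < u n := by
  have invariant : ∀ n, m ≤ n → 0 < lam0 * u n ∧ lam0 * u n ≤ u (n + 1) := by
    intro n hn
    induction n, hn using Nat.le_induction with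
    | base => exact ⟨hpos, hstep⟩
    | succ n hn ih =>
      obtain ⟨hpos_n, hstep_n⟩ := ih
      have hu_succ : 0 < u (n + 1) := hpos_n.trans_le hstep_n
      refine ⟨mul_pos hlam0 hu_succ, ?_⟩
      have hrec := hu (n + 1) (by omega)
      rw [Nat.add_sub_cancel] at hrec
      exact mul_le_of_quadratic_nonpos (ha _ (by omega)) (hc _ (by omega)).le hlam0
        (hQ _ (by omega)) hrec hu_succ.le hstep_n
  exact fun n hn => (pos_iff_pos_of_mul_pos (invariant n hn).1).mp hlam0

theorem positivity_criterion
    (a b c u : ℕ → ℝ)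
    (ha : ∀ n : ℕ, 1 ≤ n → 0 < a n)
    (hb : ∀ n : ℕ, 1 ≤ n → 0 < b n)
    (hc : ∀ n : ℕ, 1 ≤ n → 0 < c n)
    (hu : ∀ n : ℕ, 1 ≤ n → a n * u (n + 1) = b n * u n - c n * u (n - 1))
    (lam0 : ℝ) (hlam0 : 0 < lam0) (m : ℕ)
    (hQ : ∀ n : ℕ, max m 1 ≤ n → a n * lam0 ^ 2 - b n * lam0 + c n ≤ 0)
    (hstep : u (m + 1) ≥ lam0 * u m) (hpos : 0 < lam0 * u m) :
    ∀ n : ℕ, m ≤ n → 0 < u n :=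
  positivity_criterion_general a b c u ha hc hu lam0 hlam0 m hQ hstep hpos
end

section
/- Let (β_n)_{n≥0} and (γ_n)_{n≥1} be sequences of positive real numbers, and let J₀ be the infinite tridiagonal matrix with diagonal entries J₀(i,i) = β_i, superdiagonal entries J₀(i,i+1) = γ_{i+1}, subdiagonal entries J₀(i+1,i) = 1, and zeros elsewhere. Define sequences A and B by A(−1) = 1, A(0) = β₀, B(−1) = 0, B(0) = 1, and A(n) = β_n A(n−1) − γ_n A(n−2), B(n) = β_n B(n−1) − γ_n B(n−2) for n ≥ 1. If J₀ is totally nonnegative, then B(n) > 0 for all n ≥ 0 and the sequence (A(n)/B(n))_{n≥0} converges to a real limit. -/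
namespace Matrix

theorem det_succ_of_col_last_eq_zero {R : Type*} [CommRing R] {n : ℕ}
    (N : Matrix (Fin (n + 1)) (Fin (n + 1)) R)
    (h : ∀ i : Fin n, N i.castSucc (Fin.last n) = 0) :
    N.det = N (Fin.last n) (Fin.last n) * (N.submatrix Fin.castSucc Fin.castSucc).det := by
  rw [det_succ_column N (Fin.last n), Fin.sum_univ_castSucc]
  simp [h, ← two_mul]

theorem det_succ_succ_of_row_last_eq_zero {R : Type*} [CommRing R] {n : ℕ}
    (N : Matrix (Fin (n + 2)) (Fin (n + 2)) R)
    (h : ∀ j : Fin n, N (Fin.last _) j.castSucc.castSucc = 0) :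
    N.det = N (Fin.last _) (Fin.last _) * (N.submatrix Fin.castSucc Fin.castSucc).det
      - N (Fin.last _) (Fin.last n).castSucc *
        (N.submatrix Fin.castSucc (Fin.last n).castSucc.succAbove).det := by
  rw [det_succ_row N (Fin.last _), Fin.sum_univ_castSucc, Fin.sum_univ_castSucc]
  simp [h, ← two_mul, neg_add_eq_sub]

end Matrix

section Tridiagonal

variable {R : Type*} [CommRing R] (M : ℕ → ℕ → R)

noncomputable def contiguousPrincipalMinor (m k : ℕ) : R :=
  (Matrix.of fun i j : Fin k => M (m + i) (m + j)).det

theorem contiguousPrincipalMinor_zero (m : ℕ) : contiguousPrincipalMinor M m 0 = 1 :=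
  Matrix.det_fin_zero

theorem contiguousPrincipalMinor_one (m : ℕ) : contiguousPrincipalMinor M m 1 = M m m := by
  simp [contiguousPrincipalMinor]

variable {M} in
theorem contiguousPrincipalMinor_add_two (hM : ∀ i j, i + 1 < j ∨ j + 1 < i → M i j = 0)
    (m k : ℕ) :
    contiguousPrincipalMinor M m (k + 2) =
      M (m + k + 1) (m + k + 1) * contiguousPrincipalMinor M m (k + 1)
        - M (m + k) (m + k + 1) * M (m + k + 1) (m + k) * contiguousPrincipalMinor M m k := by
  set N := Matrix.of fun i j : Fin (k + 2) => M (m + i) (m + j)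
  have hsucc : ∀ j : Fin k, (Fin.last k).castSucc.succAbove j.castSucc = j.castSucc.castSucc :=
    fun j => Fin.succAbove_castSucc_of_lt _ _ (Fin.castSucc_lt_last j)
  rw [contiguousPrincipalMinor, Matrix.det_succ_succ_of_row_last_eq_zero N
      fun j => hM _ _ (.inr (by simp; omega)),
    Matrix.det_succ_of_col_last_eq_zero (N.submatrix Fin.castSucc (Fin.last k).castSucc.succAbove)
      fun i => hM _ _ (.inl (by simp; omega))]
  simp [N, contiguousPrincipalMinor, hsucc, Matrix.submatrix, add_assoc, mul_assoc, mul_left_comm]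

end Tridiagonal

theorem IsTotallyNonneg.contiguousPrincipalMinor_nonneg {M : ℕ → ℕ → ℝ}
    (hM : IsTotallyNonneg M) (m : ℕ) : ∀ k, 0 ≤ contiguousPrincipalMinor M m k
  | 0 => by simp [contiguousPrincipalMinor_zero]
  | k + 1 =>
    have hmono : StrictMono fun i : Fin (k + 1) => m + (i : ℕ) :=
      fun _ _ h => Nat.add_lt_add_left h m
    hM k _ _ hmono hmono

namespace ThreeTermRecurrence

section CommRing

variable {R : Type*} [CommRing R] {b c x y : ℕ → R}
  (hx : ∀ n, x (n + 2) = b n * x (n + 1) - c n * x n)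
  (hy : ∀ n, y (n + 2) = b n * y (n + 1) - c n * y n)
include hx hy

theorem eq_of_eq_zero_of_eq_one (h0 : x 0 = y 0) (h1 : x 1 = y 1) : x = y := by
  funext n
  induction n using Nat.twoStepInduction with
  | zero => exact h0
  | one => exact h1
  | more n ih₀ ih₁ => rw [hx, hy, ih₀, ih₁]

theorem casoratian_succ (n : ℕ) :
    x (n + 2) * y (n + 1) - x (n + 1) * y (n + 2) = c n * (x (n + 1) * y n - x n * y (n + 1)) := by
  rw [hx, hy]; ring

end CommRing

section Ordered

variable {R : Type*} [CommRing R] [LinearOrder R] [IsStrictOrderedRing R] {b c x y : ℕ → R}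
  (hc : ∀ n, 0 < c n) (hy : ∀ n, y (n + 2) = b n * y (n + 1) - c n * y n)
include hc hy

theorem pos_of_nonneg (hy_nonneg : ∀ n, 0 ≤ y n) (h0 : 0 < y 0) : ∀ n, 0 < y n
  | 0 => h0
  | n + 1 => by
    refine (hy_nonneg (n + 1)).lt_of_ne' fun hzero => ?_
    have := hy_nonneg (n + 2)
    rw [hy, hzero, mul_zero, zero_sub, neg_nonneg] at this
    exact this.not_gt (mul_pos (hc n) (pos_of_nonneg hy_nonneg h0 n))

theorem casoratian_neg (hx : ∀ n, x (n + 2) = b n * x (n + 1) - c n * x n)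
    (h0 : x 1 * y 0 < x 0 * y 1) : ∀ n, x (n + 1) * y n < x n * y (n + 1)
  | 0 => h0
  | n + 1 => by
    have := casoratian_succ hx hy n
    have := mul_neg_of_pos_of_neg (hc n) (sub_neg.2 (casoratian_neg hx h0 n))
    linarith

end Ordered

section Real

variable {b c x y : ℕ → ℝ} (hc : ∀ n, 0 < c n)
  (hx : ∀ n, x (n + 2) = b n * x (n + 1) - c n * x n)
  (hy : ∀ n, y (n + 2) = b n * y (n + 1) - c n * y n)
  (hy_pos : ∀ n, 0 < y (n + 1)) (h0 : x 1 * y 0 < x 0 * y 1)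
include hc hx hy hy_pos h0

theorem strictAnti_div : StrictAnti fun n => x (n + 1) / y (n + 1) :=
  strictAnti_nat_of_succ_lt fun n => by
    rw [div_lt_div_iff₀ (hy_pos (n + 1)) (hy_pos n)]
    exact casoratian_neg hc hy hx h0 (n + 1)

theorem exists_tendsto_div (hx_nonneg : ∀ n, 0 ≤ x (n + 1)) :
    ∃ L, Filter.Tendsto (fun n => x (n + 1) / y (n + 1)) Filter.atTop (nhds L) :=
  ⟨_, tendsto_atTop_ciInf (strictAnti_div hc hx hy hy_pos h0).antitone
    ⟨0, by rintro _ ⟨n, rfl⟩; exact div_nonneg (hx_nonneg n) (hy_pos n).le⟩⟩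

end Real

end ThreeTermRecurrence

open ThreeTermRecurrence

theorem totally_nonneg_tridiagonal_continued_fraction_converges_general
    (β : ℕ → ℝ) (γ : ℕ → ℝ)
    (hγ : ∀ n : ℕ, 1 ≤ n → 0 < γ n)
    (J : ℕ → ℕ → ℝ)
    (hJ : ∀ i j : ℕ, J i j =
      if j = i then β i
      else if j = i + 1 then γ (i + 1)
      else if i = j + 1 then 1
      else 0)
    (hTN : IsTotallyNonneg J)
    (A B : ℕ → ℝ)
    (hA0 : A 0 = 1) (hA1 : A 1 = β 0)
    (hB0 : B 0 = 0) (hB1 : B 1 = 1)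
    (hArec : ∀ n : ℕ, 1 ≤ n → A (n + 1) = β n * A n - γ n * A (n - 1))
    (hBrec : ∀ n : ℕ, 1 ≤ n → B (n + 1) = β n * B n - γ n * B (n - 1)) :
    (∀ n : ℕ, 0 < B (n + 1)) ∧
      ∃ L : ℝ, Filter.Tendsto (fun n : ℕ => A (n + 1) / B (n + 1)) Filter.atTop (nhds L) := by
  have hA : ∀ n, A (n + 2) = β (n + 1) * A (n + 1) - γ (n + 1) * A n :=
    fun n => by simpa using hArec (n + 1) (by omega)
  have hB : ∀ n, B (n + 2) = β (n + 1) * B (n + 1) - γ (n + 1) * B n :=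
    fun n => by simpa using hBrec (n + 1) (by omega)
  have hJ_tri : ∀ i j, i + 1 < j ∨ j + 1 < i → J i j = 0 := fun i j h => by
    rw [hJ]; split_ifs <;> first | rfl | omega
  have hD : ∀ m k, contiguousPrincipalMinor J m (k + 2) = β (m + k + 1) *
      contiguousPrincipalMinor J m (k + 1) - γ (m + k + 1) * contiguousPrincipalMinor J m k := by
    intro m k
    rw [contiguousPrincipalMinor_add_two hJ_tri]
    simp [hJ, add_assoc]
  have hA_minor : A = contiguousPrincipalMinor J 0 :=
    eq_of_eq_zero_of_eq_one hA (by simpa using hD 0) (by simp [hA0, contiguousPrincipalMinor_zero])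
      (by simp [hA1, contiguousPrincipalMinor_one, hJ])
  have hB_minor : (fun n => B (n + 1)) = contiguousPrincipalMinor J 1 :=
    eq_of_eq_zero_of_eq_one (fun n => hB (n + 1)) (fun k => by simpa [add_comm] using hD 1 k)
      (by simp [hB1, contiguousPrincipalMinor_zero])
      (by simp [hB, hB0, hB1, contiguousPrincipalMinor_one, hJ])
  have hB_pos : ∀ n, 0 < B (n + 1) :=
    pos_of_nonneg (fun n => hγ (n + 2) (by omega)) (fun n => hB (n + 1))
      (fun n => congrFun hB_minor n ▸ hTN.contiguousPrincipalMinor_nonneg 1 n) (by simp [hB1])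
  refine ⟨hB_pos, exists_tendsto_div (fun n => hγ (n + 1) (by omega)) hA hB hB_pos
    (by simp [hA0, hA1, hB0, hB1]) fun n => ?_⟩
  exact hA_minor ▸ hTN.contiguousPrincipalMinor_nonneg 0 (n + 1)

/-- Here `A (n+1)` and `B (n+1)` stand for the `n`-th partial numerator `A(n)` and
partial denominator `B(n)` of the continued fraction, i.e. indices are shifted
by one so that `A 0 = A(-1) = 1`, `B 0 = B(-1) = 0`. -/
theorem totally_nonneg_tridiagonal_continued_fraction_converges
    (β : ℕ → ℝ) (γ : ℕ → ℝ)
    (hβ : ∀ n : ℕ, 0 < β n)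
    (hγ : ∀ n : ℕ, 1 ≤ n → 0 < γ n)
    (J : ℕ → ℕ → ℝ)
    (hJ : ∀ i j : ℕ, J i j =
      if j = i then β i
      else if j = i + 1 then γ (i + 1)
      else if i = j + 1 then 1
      else 0)
    (hTN : IsTotallyNonneg J)
    (A B : ℕ → ℝ)
    (hA0 : A 0 = 1) (hA1 : A 1 = β 0)
    (hB0 : B 0 = 0) (hB1 : B 1 = 1)
    (hArec : ∀ n : ℕ, 1 ≤ n → A (n + 1) = β n * A n - γ n * A (n - 1))
    (hBrec : ∀ n : ℕ, 1 ≤ n → B (n + 1) = β n * B n - γ n * B (n - 1)) :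
    (∀ n : ℕ, 0 < B (n + 1)) ∧
      ∃ L : ℝ, Filter.Tendsto (fun n : ℕ => A (n + 1) / B (n + 1)) Filter.atTop (nhds L) :=
  totally_nonneg_tridiagonal_continued_fraction_converges_general β γ hγ J hJ hTN A B hA0 hA1 hB0
    hB1 hArec hBrec
end

section
/- Let a, b, c, a₀, b₀, c₀ be real numbers with a, b, c > 0 and an + a₀ > 0, bn + b₀ > 0, cn + c₀ > 0 for all integers n ≥ 1, and let (u_n)_{n≥0} satisfy (an + a₀)u_{n+1} = (bn + b₀)u_n − (cn + c₀)u_{n−1} for n ≥ 1. Set λ₁ = (b − √(b² − 4ac))/(2a). If b² ≥ 4ac, a₀λ₁² − b₀λ₁ + c₀ ≤ 0, and u_1 ≥ λ₁ u_0 > 0, then u_n > 0 for all n ≥ 0. -/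
/-!
Since λ₁ is a root of the leading characteristic polynomial aλ² − bλ + c, the characteristic
polynomial of the n-th equation, (an + a₀)λ² − (bn + b₀)λ + (cn + c₀), equals a₀λ₁² − b₀λ₁ + c₀ ≤ 0
at λ₁. A nonpositive value there is exactly what propagates the ratio bound u_{n+1} ≥ λ₁ u_n
through the recurrence, and as λ₁ > 0 the ratio bound keeps every term positive.
-/

lemma quadratic_smaller_root_eq_zero {a b c : ℝ} (ha : 0 < a) (hdisc : 4 * a * c ≤ b ^ 2) :
    a * ((b - √(b ^ 2 - 4 * a * c)) / (2 * a)) ^ 2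
      - b * ((b - √(b ^ 2 - 4 * a * c)) / (2 * a)) + c = 0 := by
  have hs : discrim a (-b) c = √(b ^ 2 - 4 * a * c) * √(b ^ 2 - 4 * a * c) := by
    rw [Real.mul_self_sqrt (by linarith), discrim]
    ring
  have := (quadratic_eq_zero_iff ha.ne' hs ((b - √(b ^ 2 - 4 * a * c)) / (2 * a))).mpr
    (Or.inr (by rw [neg_neg]))
  linear_combination this

lemma quadratic_smaller_root_pos {a b c : ℝ} (ha : 0 < a) (hb : 0 < b) (hc : 0 < c) :
    0 < (b - √(b ^ 2 - 4 * a * c)) / (2 * a) := by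
  have hsb : √(b ^ 2 - 4 * a * c) < b := by
    rw [Real.sqrt_lt' hb]
    nlinarith [mul_pos ha hc]
  exact div_pos (by linarith) (by linarith)

lemma ratio_bound_step {A B C lam v w x : ℝ} (hA : 0 < A) (hC : 0 ≤ C) (hlam : 0 < lam)
    (hQ : A * lam ^ 2 - B * lam + C ≤ 0) (hv : 0 ≤ v) (hvw : lam * w ≤ v)
    (hrec : A * x = B * v - C * w) : lam * v ≤ x := by
  have hCw : C * (lam * w) ≤ C * v := mul_le_mul_of_nonneg_left hvw hC
  have hQv : (A * lam ^ 2 - B * lam + C) * v ≤ 0 := mul_nonpos_of_nonpos_of_nonneg hQ hv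
  have : (lam * A) * (lam * v) ≤ (lam * A) * x := by
    linear_combination hQv + hCw - lam * hrec
  exact le_of_mul_le_mul_left this (mul_pos hlam hA)

lemma pos_and_ratio_bound_of_three_term_recurrence {A B C u : ℕ → ℝ} {lam : ℝ}
    (hA : ∀ n, 1 ≤ n → 0 < A n) (hC : ∀ n, 1 ≤ n → 0 ≤ C n) (hlam : 0 < lam)
    (hQ : ∀ n, 1 ≤ n → A n * lam ^ 2 - B n * lam + C n ≤ 0)
    (hu : ∀ n, 1 ≤ n → A n * u (n + 1) = B n * u n - C n * u (n - 1))
    (hu₀ : 0 < u 0) (hu₁ : lam * u 0 ≤ u 1) :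
    ∀ n, 0 < u n ∧ lam * u n ≤ u (n + 1) := by
  intro n
  induction n with
  | zero => exact ⟨hu₀, hu₁⟩
  | succ n ih =>
    obtain ⟨hpos, hratio⟩ := ih
    have hpos' : 0 < u (n + 1) := (mul_pos hlam hpos).trans_le hratio
    have hn : 1 ≤ n + 1 := Nat.le_add_left 1 n
    refine ⟨hpos', ratio_bound_step (hA _ hn) (hC _ hn) hlam (hQ _ hn) hpos'.le hratio ?_⟩
    simpa only [Nat.add_sub_cancel] using hu (n + 1) hn

theorem positivity_linear_coefficients_general
    (a b c a₀ b₀ c₀ : ℝ)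
    (ha : 0 < a) (hb : 0 < b) (hc : 0 < c)
    (hapos : ∀ n : ℕ, 1 ≤ n → 0 < a * n + a₀)
    (hcpos : ∀ n : ℕ, 1 ≤ n → 0 < c * n + c₀)
    (u : ℕ → ℝ)
    (hu : ∀ n : ℕ, 1 ≤ n →
      (a * n + a₀) * u (n + 1) = (b * n + b₀) * u n - (c * n + c₀) * u (n - 1))
    (lam1 : ℝ) (hlam1 : lam1 = (b - Real.sqrt (b ^ 2 - 4 * a * c)) / (2 * a))
    (hdisc : b ^ 2 ≥ 4 * a * c)
    (hQ : a₀ * lam1 ^ 2 - b₀ * lam1 + c₀ ≤ 0)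
    (hstep : u 1 ≥ lam1 * u 0) (hpos : 0 < lam1 * u 0) :
    ∀ n : ℕ, 0 < u n := by
  have hroot : a * lam1 ^ 2 - b * lam1 + c = 0 := hlam1 ▸ quadratic_smaller_root_eq_zero ha hdisc
  have hlam : 0 < lam1 := hlam1 ▸ quadratic_smaller_root_pos ha hb hc
  have hQn : ∀ n : ℕ, 1 ≤ n →
      (a * n + a₀) * lam1 ^ 2 - (b * n + b₀) * lam1 + (c * n + c₀) ≤ 0 := fun n _ => by
    linear_combination (n : ℝ) * hroot + hQ
  exact fun n => (pos_and_ratio_bound_of_three_term_recurrence hapos (fun n hn => (hcpos n hn).le)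
    hlam hQn hu (pos_of_mul_pos_right hpos hlam.le) hstep n).1

theorem positivity_linear_coefficients
    (a b c a₀ b₀ c₀ : ℝ)
    (ha : 0 < a) (hb : 0 < b) (hc : 0 < c)
    (hapos : ∀ n : ℕ, 1 ≤ n → 0 < a * n + a₀)
    (hbpos : ∀ n : ℕ, 1 ≤ n → 0 < b * n + b₀)
    (hcpos : ∀ n : ℕ, 1 ≤ n → 0 < c * n + c₀)
    (u : ℕ → ℝ)
    (hu : ∀ n : ℕ, 1 ≤ n →
      (a * n + a₀) * u (n + 1) = (b * n + b₀) * u n - (c * n + c₀) * u (n - 1))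
    (lam1 : ℝ) (hlam1 : lam1 = (b - Real.sqrt (b ^ 2 - 4 * a * c)) / (2 * a))
    (hdisc : b ^ 2 ≥ 4 * a * c)
    (hQ : a₀ * lam1 ^ 2 - b₀ * lam1 + c₀ ≤ 0)
    (hstep : u 1 ≥ lam1 * u 0) (hpos : 0 < lam1 * u 0) :
    ∀ n : ℕ, 0 < u n :=
  positivity_linear_coefficients_general a b c a₀ b₀ c₀ ha hb hc hapos hcpos u hu lam1 hlam1 hdisc
    hQ hstep hpos
end

section
/- Let a, b, c be positive real numbers and let (u_n)_{n≥0} satisfy a·u_{n+1} = b·u_n − c·u_{n−1} for all n ≥ 1. Then u_n > 0 for all n ≥ 0 if and only if b² ≥ 4ac and u_1 ≥ λ₁ u_0 > 0, where λ₁ = (b − √(b² − 4ac))/(2a). -/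
/-!
Positivity forces the ratios `r n = u (n + 1) / u n` to satisfy
`a * r n * (r n - r (n + 1)) = a * r n ^ 2 - b * r n + c`. If the quadratic on the right were bounded
below by some `δ > 0` on `(0, r 0]`, the ratios would decrease by at least `δ / (a * r 0)` at every
step and eventually become negative. Taking `δ` to be the value of the quadratic at
`min (r 0) (b / (2 * a))` shows that this value is `≤ 0`, which rules out a negative discriminant and
forces `r 0 ≥ λ₁`. Conversely, since `λ₁` is a root, `u (n + 1) - λ₁ * u n` is multiplied by
`(b - a * λ₁) / a > 0` at each step, so it stays nonnegative and `u (n + 1) ≥ λ₁ * u n > 0`.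
-/

noncomputable def smallerRoot (a b c : ℝ) : ℝ := (b - Real.sqrt (b ^ 2 - 4 * a * c)) / (2 * a)

section Quadratic

variable {a b c : ℝ}

theorem smallerRoot_pos (ha : 0 < a) (hb : 0 < b) (hc : 0 < c) : 0 < smallerRoot a b c := by
  have hsqrt : Real.sqrt (b ^ 2 - 4 * a * c) < b :=
    (Real.sqrt_lt' hb).2 (by nlinarith [mul_pos ha hc])
  exact div_pos (by linarith) (by linarith)

theorem mul_smallerRoot_lt (ha : 0 < a) (hb : 0 < b) : a * smallerRoot a b c < b := by
  have hsqrt := Real.sqrt_nonneg (b ^ 2 - 4 * a * c)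
  rw [smallerRoot, mul_div_assoc', mul_comm 2 a, mul_div_mul_left _ _ ha.ne']
  linarith

theorem smallerRoot_isRoot (ha : a ≠ 0) (hdisc : 4 * a * c ≤ b ^ 2) :
    a * smallerRoot a b c ^ 2 - b * smallerRoot a b c + c = 0 := by
  have hsq := Real.sq_sqrt (sub_nonneg.2 hdisc)
  rw [smallerRoot]
  set s := Real.sqrt (b ^ 2 - 4 * a * c)
  field_simp
  linear_combination hsq

theorem quadratic_pos_of_discrim_neg (ha : 0 < a) (hdisc : b ^ 2 < 4 * a * c) (x : ℝ) :
    0 < a * x ^ 2 - b * x + c := by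
  nlinarith [sq_nonneg (2 * a * x - b)]

theorem quadratic_pos_of_lt_smallerRoot (ha : 0 < a) (hdisc : 4 * a * c ≤ b ^ 2) {x : ℝ}
    (hx : x < smallerRoot a b c) : 0 < a * x ^ 2 - b * x + c := by
  set s := Real.sqrt (b ^ 2 - 4 * a * c)
  have hsq : s ^ 2 = b ^ 2 - 4 * a * c := Real.sq_sqrt (sub_nonneg.2 hdisc)
  have hs : s < b - 2 * a * x := by
    rw [smallerRoot, lt_div_iff₀ (by positivity)] at hx
    linarith
  nlinarith [Real.sqrt_nonneg (b ^ 2 - 4 * a * c)]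

/-- On `(-∞, y]` the quadratic is smallest at `y` or at the vertex `b / (2 * a)`. -/
theorem quadratic_min_vertex_le (ha : 0 < a) {x y : ℝ} (hxy : x ≤ y) :
    a * min y (b / (2 * a)) ^ 2 - b * min y (b / (2 * a)) + c ≤ a * x ^ 2 - b * x + c := by
  set v := b / (2 * a)
  have hvertex : 2 * a * v = b := mul_div_cancel₀ b (by positivity)
  rcases min_cases y v with ⟨hmin, hy⟩ | ⟨hmin, -⟩ <;> rw [hmin, ← hvertex]
  · nlinarith [mul_nonneg (mul_nonneg ha.le (sub_nonneg.2 hxy)) (by linarith : 0 ≤ 2 * v - x - y)]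
  · nlinarith [mul_nonneg ha.le (sq_nonneg (x - v))]

end Quadratic

theorem exists_neg_of_le_sub_succ {r : ℕ → ℝ} {η : ℝ} (hη : 0 < η)
    (hdrop : ∀ n, η ≤ r n - r (n + 1)) : ∃ n, r n < 0 := by
  have hlin : ∀ n : ℕ, r n ≤ r 0 - n * η := by
    intro n
    induction n with
    | zero => simp
    | succ n ih => push_cast; linarith [hdrop n]
  obtain ⟨N, hN⟩ := exists_nat_gt (r 0 / η)
  exact ⟨N, by linarith [hlin N, (div_lt_iff₀ hη).1 hN]⟩

section Recurrence

variable {a b c : ℝ} {u : ℕ → ℝ}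

theorem false_of_ratio_descent (ha : 0 < a) {r : ℕ → ℝ} (hpos : ∀ n, 0 < r n)
    (hstep : ∀ n, a * r n * r (n + 1) = b * r n - c) {δ : ℝ} (hδ : 0 < δ)
    (hquad : ∀ x, 0 < x → x ≤ r 0 → δ ≤ a * x ^ 2 - b * x + c) : False := by
  have hdrop : ∀ n, r n ≤ r 0 → δ / (a * r 0) ≤ r n - r (n + 1) := by
    intro n hn
    have hquadn := hquad (r n) (hpos n) hn
    have hgap : a * r n * (r n - r (n + 1)) = a * r n ^ 2 - b * r n + c := by
      linear_combination -hstep n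
    have hgap_pos : 0 ≤ r n - r (n + 1) := by
      nlinarith [mul_pos ha (hpos n)]
    rw [div_le_iff₀ (mul_pos ha (hpos 0))]
    nlinarith [mul_le_mul_of_nonneg_left hn ha.le]
  have hη : 0 < δ / (a * r 0) := div_pos hδ (mul_pos ha (hpos 0))
  have hbounded : ∀ n, r n ≤ r 0 := by
    intro n
    induction n with
    | zero => exact le_rfl
    | succ n ih => linarith [hdrop n ih]
  obtain ⟨n, hn⟩ := exists_neg_of_le_sub_succ hη fun n => hdrop n (hbounded n)
  exact (hpos n).not_gt hn

theorem ratio_recurrence (hu : ∀ n, 1 ≤ n → a * u (n + 1) = b * u n - c * u (n - 1))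
    (hpos : ∀ n, 0 < u n) (n : ℕ) :
    a * (u (n + 1) / u n) * (u (n + 2) / u (n + 1)) = b * (u (n + 1) / u n) - c := by
  have hrec := hu (n + 1) le_add_self
  rw [Nat.add_sub_cancel] at hrec
  have := (hpos n).ne'
  have := (hpos (n + 1)).ne'
  field_simp
  linear_combination hrec

theorem quadratic_min_vertex_nonpos_of_forall_pos (ha : 0 < a)
    (hu : ∀ n, 1 ≤ n → a * u (n + 1) = b * u n - c * u (n - 1)) (hpos : ∀ n, 0 < u n) :
    a * min (u 1 / u 0) (b / (2 * a)) ^ 2 - b * min (u 1 / u 0) (b / (2 * a)) + c ≤ 0 := by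
  by_contra! hm
  exact false_of_ratio_descent ha (fun n => div_pos (hpos (n + 1)) (hpos n))
    (ratio_recurrence hu hpos) hm fun x _ hx => quadratic_min_vertex_le ha hx

theorem recurrence_sub_root_mul (hu : ∀ n, 1 ≤ n → a * u (n + 1) = b * u n - c * u (n - 1))
    {l : ℝ} (hl : a * l ^ 2 - b * l + c = 0) (n : ℕ) :
    a * (u (n + 2) - l * u (n + 1)) = (b - a * l) * (u (n + 1) - l * u n) := by
  have hrec := hu (n + 1) le_add_self
  rw [Nat.add_sub_cancel] at hrec
  linear_combination hrec - u n * hl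

theorem root_mul_le_succ (ha : 0 < a)
    (hu : ∀ n, 1 ≤ n → a * u (n + 1) = b * u n - c * u (n - 1))
    {l : ℝ} (hl : a * l ^ 2 - b * l + c = 0) (hlb : a * l ≤ b) (h0 : l * u 0 ≤ u 1) (n : ℕ) :
    l * u n ≤ u (n + 1) := by
  induction n with
  | zero => exact h0
  | succ n ih =>
    have hprod : 0 ≤ a * (u (n + 2) - l * u (n + 1)) := by
      rw [recurrence_sub_root_mul hu hl]
      exact mul_nonneg (sub_nonneg.2 hlb) (sub_nonneg.2 ih)
    exact sub_nonneg.1 (nonneg_of_mul_nonneg_right hprod ha)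

end Recurrence

theorem positivity_constant_coefficients_iff
    (a b c : ℝ) (ha : 0 < a) (hb : 0 < b) (hc : 0 < c)
    (u : ℕ → ℝ)
    (hu : ∀ n : ℕ, 1 ≤ n → a * u (n + 1) = b * u n - c * u (n - 1))
    (lam1 : ℝ) (hlam1 : lam1 = (b - Real.sqrt (b ^ 2 - 4 * a * c)) / (2 * a)) :
    (∀ n : ℕ, 0 < u n) ↔ (b ^ 2 ≥ 4 * a * c ∧ u 1 ≥ lam1 * u 0 ∧ 0 < lam1 * u 0) := by
  obtain rfl : lam1 = smallerRoot a b c := hlam1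
  have hlam1_pos := smallerRoot_pos ha hb hc
  constructor
  · intro hpos
    have hm := quadratic_min_vertex_nonpos_of_forall_pos ha hu hpos
    have hdisc : 4 * a * c ≤ b ^ 2 := by
      by_contra! hdisc
      exact (quadratic_pos_of_discrim_neg ha hdisc _).not_ge hm
    have hlam1_le : smallerRoot a b c ≤ u 1 / u 0 :=
      (not_lt.1 fun h => (quadratic_pos_of_lt_smallerRoot ha hdisc h).not_ge hm).trans
        (min_le_left _ _)
    exact ⟨hdisc, (le_div_iff₀ (hpos 0)).1 hlam1_le, mul_pos hlam1_pos (hpos 0)⟩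
  · rintro ⟨hdisc, h1, h0⟩ n
    have hstep := root_mul_le_succ ha hu (smallerRoot_isRoot ha.ne' hdisc)
      (mul_smallerRoot_lt ha hb).le h1
    induction n with
    | zero => exact pos_of_mul_pos_right h0 hlam1_pos.le
    | succ n ih => exact (mul_pos hlam1_pos ih).trans_le (hstep n)
end

section
/- Let b, c be positive real numbers and let (u_n)_{n≥0} be defined by u_0 = 1, u_1 = b, and u_{n+1} = b·u_n − c·u_{n−1} for n ≥ 1 (so that 1/(1 − bx + cx²) = Σ_{n≥0} u_n xⁿ). Then u_n > 0 for all n ≥ 0 if and only if b² ≥ 4c. -/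
/-!
If `b² ≥ 4c`, the ratio `u (n + 1) / u n` never drops below the double root `b / 2` of
`x² - b x + c`, so positivity propagates. If `b² < 4c`, then as long as the terms stay positive
the ratio `r = u (n + 1) / u n` evolves by `r ↦ b - c / r`, and by AM-GM `r + c / r ≥ 2 √c > b`,
so every step lowers the ratio by at least `2 √c - b > 0`; it would eventually become negative.
-/

lemma two_sqrt_le_add_div {c r : ℝ} (hc : 0 ≤ c) (hr : 0 < r) : 2 * √c ≤ r + c / r := by
  have hsq : √c ^ 2 = c := Real.sq_sqrt hc
  rw [← sub_nonneg]
  have hsquare : r + c / r - 2 * √c = (r - √c) ^ 2 / r := by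
    field_simp
    linear_combination -hsq
  rw [hsquare]
  positivity

section SecondOrderRecurrence

variable {b c : ℝ} {u : ℕ → ℝ}

theorem forall_pos_of_four_mul_le_sq (hb : 0 < b) (hcb : 4 * c ≤ b ^ 2)
    (hrec : ∀ n, u (n + 2) = b * u (n + 1) - c * u n) (h0 : 0 < u 0) (h1 : b * u 0 ≤ 2 * u 1)
    (n : ℕ) : 0 < u n := by
  have hratio : ∀ n, 0 < u n ∧ b * u n ≤ 2 * u (n + 1) := by
    intro n
    induction n with
    | zero => exact ⟨h0, h1⟩
    | succ n ih =>
      obtain ⟨hpos, hle⟩ := ih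
      have hpos' : 0 < u (n + 1) := by nlinarith
      refine ⟨hpos', ?_⟩
      rw [hrec]
      nlinarith
  exact (hratio n).1

lemma succ_div_le_of_forall_pos (hc : 0 ≤ c) (hrec : ∀ n, u (n + 2) = b * u (n + 1) - c * u n)
    (hpos : ∀ n, 0 < u n) (n : ℕ) :
    u (n + 1) / u n ≤ u 1 / u 0 - n * (2 * √c - b) := by
  induction n with
  | zero => simp
  | succ n ih =>
    have hratio : 0 < u (n + 1) / u n := div_pos (hpos _) (hpos _)
    have hstep : u (n + 2) / u (n + 1) = b - c / (u (n + 1) / u n) := by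
      rw [hrec, div_div_eq_mul_div]
      field_simp [(hpos (n + 1)).ne']
    have hamgm := two_sqrt_le_add_div hc hratio
    rw [hstep]
    push_cast
    linarith

theorem exists_nonpos_of_lt_two_sqrt (hc : 0 ≤ c) (hbc : b < 2 * √c)
    (hrec : ∀ n, u (n + 2) = b * u (n + 1) - c * u n) : ∃ n, u n ≤ 0 := by
  by_contra! hpos
  obtain ⟨n, hn⟩ := exists_nat_gt (u 1 / u 0 / (2 * √c - b))
  have hgap : u 1 / u 0 < n * (2 * √c - b) := (div_lt_iff₀ (by linarith)).mp hn
  have hratio := succ_div_le_of_forall_pos hc hrec hpos n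
  have hratio_pos : 0 < u (n + 1) / u n := div_pos (hpos _) (hpos _)
  linarith

end SecondOrderRecurrence

theorem positivity_rational_function_coefficients
    (b c : ℝ) (hb : 0 < b) (hc : 0 < c)
    (u : ℕ → ℝ) (h0 : u 0 = 1) (h1 : u 1 = b)
    (hu : ∀ n : ℕ, 1 ≤ n → u (n + 1) = b * u n - c * u (n - 1)) :
    (∀ n : ℕ, 0 < u n) ↔ b ^ 2 ≥ 4 * c := by
  have hrec : ∀ n, u (n + 2) = b * u (n + 1) - c * u n := fun n => hu (n + 1) n.succ_pos
  constructor
  · intro hpos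
    by_contra! hlt
    have hbc : b / 2 < √c := (Real.lt_sqrt (by positivity)).mpr (by linarith)
    obtain ⟨n, hn⟩ := exists_nonpos_of_lt_two_sqrt hc.le (by linarith) hrec
    exact (hpos n).not_ge hn
  · intro hge
    exact forall_pos_of_four_mul_le_sq hb hge hrec (by simp [h0]) (by rw [h0, h1]; linarith)
end

section
/- Let b, c, d be positive real numbers and let (u_n)_{n≥0} be defined by u_0 = 1, u_1 = b − d, and u_{n+1} = b·u_n − c·u_{n−1} for n ≥ 1 (so that (1 − dx)/(1 − bx + cx²) = Σ_{n≥0} u_n xⁿ). Then u_n > 0 for all n ≥ 1 if and only if b² ≥ 4c and d ≤ (b + √(b² − 4c))/2. -/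
/-!
If `b² ≥ 4c`, then `1 - bx + cx² = (1 - sx)(1 - rx)` with `s ≤ r` the roots of `x² - bx + c`, and
`u (n + 1) = s u n + rⁿ (r - d)`, so `u` stays positive as soon as `d ≤ r`.

Conversely, if all `u n` are positive, the ratios `t n = u (n + 1) / u n` follow the map
`t ↦ b - c / t = t - (t² - bt + c) / t`. If `b² < 4c`, or if `t 0 = b - d` lies below both roots,
then `t² - bt + c` is bounded below by some `m > 0` on `(0, t 0]`, so each step lowers `t` by at
least `m / t 0` and the ratios become nonpositive after finitely many steps.
-/

open Set

lemma exists_nonpos_of_succ_le_sub {t : ℕ → ℝ} {e : ℝ} (he : 0 < e)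
    (hstep : ∀ n, t n ≤ t 0 → t (n + 1) ≤ t n - e) : ∃ n, t n ≤ 0 := by
  have hdecr : ∀ n : ℕ, t n ≤ t 0 - n * e := by
    intro n
    induction n with
    | zero => simp
    | succ n ih =>
      have := hstep n (by nlinarith [n.cast_nonneg (α := ℝ)])
      push_cast
      linarith
  obtain ⟨n, hn⟩ := exists_nat_gt (t 0 / e)
  refine ⟨n, (hdecr n).trans ?_⟩
  linarith [(div_lt_iff₀ he).mp hn]

section Ratios

variable {b c : ℝ}

lemma not_forall_pos_of_quadratic_ge {t : ℕ → ℝ} {m : ℝ}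
    (hrec : ∀ n, t (n + 1) * t n = b * t n - c) (hm : 0 < m)
    (hq : ∀ x ∈ Ioc 0 (t 0), m ≤ x ^ 2 - b * x + c) : ¬ ∀ n, 0 < t n := by
  intro hpos
  obtain ⟨n, hn⟩ := exists_nonpos_of_succ_le_sub (div_pos hm (hpos 0)) fun n hle => by
    have htn := hpos n
    have hmx : m / t 0 * t n ≤ m := by
      rw [div_mul_eq_mul_div, div_le_iff₀ (hpos 0)]
      exact mul_le_mul_of_nonneg_left hle hm.le
    have hstep : t (n + 1) * t n ≤ (t n - m / t 0) * t n := by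
      nlinarith [hq (t n) ⟨htn, hle⟩, hrec n]
    exact le_of_mul_le_mul_right hstep htn
  exact (hpos n).not_ge hn

variable {u : ℕ → ℝ}

lemma ratio_succ_mul_ratio (hrec : ∀ n, u (n + 2) = b * u (n + 1) - c * u n)
    (hpos : ∀ n, 0 < u n) (n : ℕ) :
    u (n + 2) / u (n + 1) * (u (n + 1) / u n) = b * (u (n + 1) / u n) - c := by
  have := (hpos n).ne'
  have := (hpos (n + 1)).ne'
  field_simp
  rw [hrec n]
  ring

lemma not_forall_pos_of_quadratic_ge_ratio
    (hrec : ∀ n, u (n + 2) = b * u (n + 1) - c * u n) {m : ℝ} (hm : 0 < m)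
    (hq : ∀ x ∈ Ioc 0 (u 1 / u 0), m ≤ x ^ 2 - b * x + c) : ¬ ∀ n, 0 < u n := fun hpos =>
  not_forall_pos_of_quadratic_ge (t := fun n => u (n + 1) / u n)
    (ratio_succ_mul_ratio hrec hpos) hm hq fun n => div_pos (hpos (n + 1)) (hpos n)

lemma four_mul_le_sq_of_forall_pos (hrec : ∀ n, u (n + 2) = b * u (n + 1) - c * u n)
    (hpos : ∀ n, 0 < u n) : 4 * c ≤ b ^ 2 := by
  by_contra! hlt
  refine not_forall_pos_of_quadratic_ge_ratio hrec (m := c - b ^ 2 / 4) (by linarith)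
    (fun x _ => ?_) hpos
  nlinarith [sq_nonneg (x - b / 2)]

lemma le_larger_root_of_forall_pos {d : ℝ} (h0 : u 0 = 1) (h1 : u 1 = b - d)
    (hrec : ∀ n, u (n + 2) = b * u (n + 1) - c * u n) (hpos : ∀ n, 0 < u n)
    (hbc : 4 * c ≤ b ^ 2) : d ≤ (b + √(b ^ 2 - 4 * c)) / 2 := by
  by_contra! hrd
  set q := √(b ^ 2 - 4 * c)
  have hq2 : q ^ 2 = b ^ 2 - 4 * c := Real.sq_sqrt (by linarith)
  have hq0 : 0 ≤ q := Real.sqrt_nonneg _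
  have hts : b - d < (b - q) / 2 := by linarith
  refine not_forall_pos_of_quadratic_ge_ratio hrec (m := ((b - q) / 2 - (b - d)) ^ 2)
    (by nlinarith) (fun x hx => ?_) hpos
  rw [h0, h1, div_one] at hx
  have hfactor : x ^ 2 - b * x + c = ((b - q) / 2 - x) * ((b + q) / 2 - x) := by
    linear_combination (1 / 4 : ℝ) * hq2
  rw [hfactor, sq]
  apply mul_le_mul <;> linarith [hx.2]

lemma succ_eq_mul_add_pow {s r d : ℝ} (h0 : u 0 = 1) (h1 : u 1 = s + r - d)
    (hrec : ∀ n, u (n + 2) = (s + r) * u (n + 1) - s * r * u n) (n : ℕ) :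
    u (n + 1) = s * u n + r ^ n * (r - d) := by
  induction n with
  | zero => rw [h1, h0]; ring
  | succ n ih => rw [hrec, ih]; ring

lemma forall_pos_of_le_larger_root {d : ℝ} (hb : 0 < b) (hc : 0 < c) (h0 : u 0 = 1)
    (h1 : u 1 = b - d) (hrec : ∀ n, u (n + 2) = b * u (n + 1) - c * u n)
    (hbc : 4 * c ≤ b ^ 2) (hdr : d ≤ (b + √(b ^ 2 - 4 * c)) / 2) (n : ℕ) : 0 < u n := by
  set q := √(b ^ 2 - 4 * c)
  have hq2 : q ^ 2 = b ^ 2 - 4 * c := Real.sq_sqrt (by linarith)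
  have hq0 : 0 ≤ q := Real.sqrt_nonneg _
  have hqb : q < b := by nlinarith
  have hsum : (b - q) / 2 + (b + q) / 2 = b := by ring
  have hprod : (b - q) / 2 * ((b + q) / 2) = c := by linear_combination (-1 / 4 : ℝ) * hq2
  have hsucc := succ_eq_mul_add_pow (s := (b - q) / 2) (r := (b + q) / 2) (d := d) h0
    (by rw [hsum, h1]) (by rwa [hsum, hprod])
  induction n with
  | zero => simp [h0]
  | succ n ih =>
    rw [hsucc n]
    have : 0 ≤ ((b + q) / 2) ^ n * ((b + q) / 2 - d) :=
      mul_nonneg (pow_nonneg (by linarith) n) (by linarith)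
    nlinarith

end Ratios

theorem positivity_rational_function_coefficients_with_numerator_general
    (b c d : ℝ) (hb : 0 < b) (hc : 0 < c)
    (u : ℕ → ℝ) (h0 : u 0 = 1) (h1 : u 1 = b - d)
    (hu : ∀ n : ℕ, 1 ≤ n → u (n + 1) = b * u n - c * u (n - 1)) :
    (∀ n : ℕ, 1 ≤ n → 0 < u n) ↔
      (b ^ 2 ≥ 4 * c ∧ d ≤ (b + Real.sqrt (b ^ 2 - 4 * c)) / 2) := by
  have hrec : ∀ n, u (n + 2) = b * u (n + 1) - c * u n := fun n => hu (n + 1) (by omega)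
  constructor
  · intro hpos
    have hall : ∀ n, 0 < u n
      | 0 => h0 ▸ one_pos
      | n + 1 => hpos (n + 1) (by omega)
    have hbc := four_mul_le_sq_of_forall_pos hrec hall
    exact ⟨hbc, le_larger_root_of_forall_pos h0 h1 hrec hall hbc⟩
  · rintro ⟨hbc, hdr⟩ n -
    exact forall_pos_of_le_larger_root hb hc h0 h1 hrec hbc hdr n

theorem positivity_rational_function_coefficients_with_numerator
    (b c d : ℝ) (hb : 0 < b) (hc : 0 < c) (hd : 0 < d)
    (u : ℕ → ℝ) (h0 : u 0 = 1) (h1 : u 1 = b - d)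
    (hu : ∀ n : ℕ, 1 ≤ n → u (n + 1) = b * u n - c * u (n - 1)) :
    (∀ n : ℕ, 1 ≤ n → 0 < u n) ↔
      (b ^ 2 ≥ 4 * c ∧ d ≤ (b + Real.sqrt (b ^ 2 - 4 * c)) / 2) :=
  positivity_rational_function_coefficients_with_numerator_general b c d hb hc u h0 h1 hu
end

section
/- Let a be a real number and let (u_n)_{n≥0} be defined by u_0 = 1, u_1 = 2 − a, and (n+1)u_{n+1} = (2 − a)(2n+1)u_n − a²n·u_{n−1} for n ≥ 1. Then u_n > 0 for all n ≥ 0 if and only if a ≤ 1. -/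
/-!
Writing `b = 2 - a` and `c = a²`, the recurrence is the three-term recurrence of
`c^(n/2) Pₙ(b / √c)` with `Pₙ` the Legendre polynomials. If `c ≤ b²`, then `b uₙ ≤ uₙ₊₁`
propagates along the recurrence, so the sequence stays positive. If `b² < c` and the sequence
were positive, AM-GM applied to the recurrence would make the normalized ratio
`(n + 1) uₙ₊₁ / ((2n + 1) uₙ)` decay at least like `(b² / c)ⁿ`, while positivity of `uₙ₊₂`
bounds the same ratio below by `c / (4b)`.
-/

def LegendreRecurrence (b c : ℝ) (u : ℕ → ℝ) : Prop :=
  ∀ n : ℕ, ((n : ℝ) + 2) * u (n + 2) = b * (2 * n + 3) * u (n + 1) - c * (n + 1) * u n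

namespace LegendreRecurrence

variable {b c : ℝ} {u : ℕ → ℝ}

theorem pos_and_mul_le_succ (h : LegendreRecurrence b c u) (hb : 0 < b) (hc : c ≤ b ^ 2)
    (h0 : 0 < u 0) (h1 : b * u 0 ≤ u 1) (n : ℕ) : 0 < u n ∧ b * u n ≤ u (n + 1) := by
  induction n with
  | zero => exact ⟨h0, h1⟩
  | succ n ih =>
    obtain ⟨hpos, hle⟩ := ih
    have hpos' : 0 < u (n + 1) := (mul_pos hb hpos).trans_le hle
    refine ⟨hpos', ?_⟩
    have hcu : c * u n ≤ b * u (n + 1) :=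
      calc c * u n ≤ b ^ 2 * u n := mul_le_mul_of_nonneg_right hc hpos.le
        _ = b * (b * u n) := by ring
        _ ≤ b * u (n + 1) := mul_le_mul_of_nonneg_left hle hb.le
    have hn : (0 : ℝ) ≤ n + 1 := by positivity
    have := h n
    nlinarith [mul_le_mul_of_nonneg_left hcu hn]

theorem four_mul_mul_le_sq (h : LegendreRecurrence b c u) (n : ℕ) :
    4 * c * ((n : ℝ) + 1) * (n + 2) * u (n + 2) * u n ≤
      b ^ 2 * (2 * n + 3) ^ 2 * u (n + 1) ^ 2 := by
  have hsum : ((n : ℝ) + 2) * u (n + 2) + c * (n + 1) * u n = b * (2 * n + 3) * u (n + 1) := by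
    linarith [h n]
  calc 4 * c * ((n : ℝ) + 1) * (n + 2) * u (n + 2) * u n
      = 4 * (((n : ℝ) + 2) * u (n + 2)) * (c * (n + 1) * u n) := by ring
    _ ≤ (((n : ℝ) + 2) * u (n + 2) + c * (n + 1) * u n) ^ 2 := four_mul_le_sq_add _ _
    _ = b ^ 2 * (2 * n + 3) ^ 2 * u (n + 1) ^ 2 := by rw [hsum]; ring

theorem mul_lt_four_mul (h : LegendreRecurrence b c u) (n : ℕ) (hu : 0 < u (n + 2))
    (hbu : 0 ≤ b * u (n + 1)) :
    c * (2 * n + 1) * u n < 4 * b * (n + 1) * u (n + 1) := by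
  have hrec := h n
  have hn : (0 : ℝ) ≤ n := n.cast_nonneg
  have hlt : c * (n + 1) * u n < b * (2 * n + 3) * u (n + 1) := by nlinarith
  nlinarith [mul_lt_mul_of_pos_left hlt (by positivity : (0 : ℝ) < 2 * n + 1)]

theorem exists_nonpos_of_sq_lt (h : LegendreRecurrence b c u) (hbc : b ^ 2 < c) :
    ∃ n, u n ≤ 0 := by
  by_contra! hpos
  have hc : 0 < c := (sq_nonneg b).trans_lt hbc
  have hb : 0 < b := by
    have h₀ := h 0
    simp only [Nat.cast_zero] at h₀
    have : 0 < b * u 1 := by nlinarith [mul_pos hc (hpos 0), hpos 2]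
    exact (pos_iff_pos_of_mul_pos this).2 (hpos 1)
  set w : ℕ → ℝ := fun n => (n + 1) * u (n + 1) / ((2 * n + 1) * u n) with hw
  have hw_pos : 0 < w 0 := by simp only [hw]; have := hpos 0; have := hpos 1; positivity
  have hw_lower (n : ℕ) : c / (4 * b) < w n := by
    have := h.mul_lt_four_mul n (hpos (n + 2)) (mul_pos hb (hpos (n + 1))).le
    have := hpos n
    rw [hw, div_lt_div_iff₀ (by positivity) (by positivity)]
    linarith
  have hw_step (n : ℕ) : w (n + 1) ≤ b ^ 2 / c * w n := by
    have := hpos n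
    have := hpos (n + 1)
    have := hpos (n + 2)
    simp only [hw]
    push_cast
    rw [div_mul_div_comm, div_le_div_iff₀ (by positivity) (by positivity)]
    have hn : (0 : ℝ) ≤ n := n.cast_nonneg
    refine le_of_mul_le_mul_left ?_ (by positivity : (0 : ℝ) < 4 * (n + 1))
    calc 4 * ((n : ℝ) + 1) * ((n + 1 + 1) * u (n + 1 + 1) * (c * ((2 * n + 1) * u n)))
        = (2 * n + 1) * (4 * c * (n + 1) * (n + 2) * u (n + 2) * u n) := by ring
      _ ≤ (2 * n + 1) * (b ^ 2 * (2 * n + 3) ^ 2 * u (n + 1) ^ 2) :=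
        mul_le_mul_of_nonneg_left (h.four_mul_mul_le_sq n) (by positivity)
      _ ≤ 4 * (n + 1) * (b ^ 2 * ((n + 1) * u (n + 1)) * ((2 * (n + 1) + 1) * u (n + 1))) := by
        -- `(2n + 1)(2n + 3) ≤ 4(n + 1)²`
        nlinarith [sq_nonneg (b * u (n + 1))]
  have hq : b ^ 2 / c < 1 := (div_lt_one hc).2 hbc
  obtain ⟨n, hn⟩ := exists_pow_lt_of_lt_one (div_pos (div_pos hc (mul_pos four_pos hb)) hw_pos) hq
  have := le_geom (by positivity) n fun k _ => hw_step k
  have := hw_lower n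
  rw [lt_div_iff₀ hw_pos] at hn
  linarith

end LegendreRecurrence

theorem positivity_diagonal_coefficients_iff
    (a : ℝ) (u : ℕ → ℝ) (h0 : u 0 = 1) (h1 : u 1 = 2 - a)
    (hu : ∀ n : ℕ, 1 ≤ n →
      ((n : ℝ) + 1) * u (n + 1) = (2 - a) * (2 * n + 1) * u n - a ^ 2 * n * u (n - 1)) :
    (∀ n : ℕ, 0 < u n) ↔ a ≤ 1 := by
  have hrec : LegendreRecurrence (2 - a) (a ^ 2) u := fun n => by
    have := hu (n + 1) n.succ_pos
    push_cast at this
    linarith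
  constructor
  · intro hpos
    by_contra! ha
    obtain ⟨n, hn⟩ := hrec.exists_nonpos_of_sq_lt (by nlinarith)
    exact (hpos n).not_ge hn
  · intro ha n
    refine (hrec.pos_and_mul_le_succ (by linarith) (by nlinarith) ?_ ?_ n).1 <;> simp [h0, h1]
end

section
/- Let (s_n)_{n≥0} be defined by s_0 = 1, s_1 = 12, and 2(n+1)²s_{n+1} = 3(27n² + 27n + 8)s_n − 81(3n − 1)(3n + 1)s_{n−1} for n ≥ 1. Then s_n > 0 for all n ≥ 0. -/
/-!
The ratio `s (n + 1) / s n` never drops below `27 / 2` once `n ≥ 1` (it tends to `27`).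
Indeed, if `s (n - 1) ≤ (2 / 27) s n` with `s n ≥ 0`, the subtracted term of the recurrence is at
most `6 (9 n² - 1) s n`, so `2 (n + 1)² s (n + 1) ≥ (27 n² + 81 n + 30) s n ≥ 27 (n + 1)² s n`.
Starting from `s 1 = 12`, `s 2 = 198`, induction propagates this ratio bound and hence positivity.
-/

theorem mul_le_of_szego_recurrence {x u v w : ℝ} (hx : 1 ≤ x) (hv : 0 ≤ v)
    (huv : 27 / 2 * u ≤ v)
    (hrec : 2 * (x + 1) ^ 2 * w =
      3 * (27 * x ^ 2 + 27 * x + 8) * v - 81 * (3 * x - 1) * (3 * x + 1) * u) :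
    27 / 2 * v ≤ w := by
  have hsub : 81 * (3 * x - 1) * (3 * x + 1) * u ≤ 6 * (3 * x - 1) * (3 * x + 1) * v := by
    have : 0 ≤ 6 * (3 * x - 1) * (3 * x + 1) := by nlinarith
    nlinarith [mul_le_mul_of_nonneg_left huv this]
  have hmul : (x + 1) ^ 2 * (27 * v) ≤ (x + 1) ^ 2 * (2 * w) := by
    nlinarith [mul_nonneg (by linarith : 0 ≤ 27 * x + 3) hv]
  linarith [le_of_mul_le_mul_left hmul (by positivity)]

theorem szego_diagonal_positive
    (s : ℕ → ℝ) (h0 : s 0 = 1) (h1 : s 1 = 12)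
    (hs : ∀ n : ℕ, 1 ≤ n →
      2 * ((n : ℝ) + 1) ^ 2 * s (n + 1) =
        3 * (27 * n ^ 2 + 27 * n + 8) * s n - 81 * (3 * n - 1) * (3 * n + 1) * s (n - 1)) :
    ∀ n : ℕ, 0 < s n := by
  have h2 : s 2 = 198 := by
    have := hs 1 le_rfl
    norm_num [h0, h1] at this
    linarith
  have ratio : ∀ n, 1 ≤ n → 0 < s n ∧ 27 / 2 * s n ≤ s (n + 1) := by
    intro n hn
    induction n, hn using Nat.le_induction with
    | base => norm_num [h1, h2]
    | succ n hn ih =>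
      obtain ⟨hpos, hle⟩ := ih
      have hpos' : 0 < s (n + 1) := by linarith
      exact ⟨hpos', mul_le_of_szego_recurrence (by norm_cast; omega) hpos'.le hle
        (hs (n + 1) (by omega))⟩
  rintro (_ | n)
  · norm_num [h0]
  · exact (ratio (n + 1) (by omega)).1
end

section
/- Let (h_n)_{n≥0} be defined by h_0 = 1, h_1 = 24, and 3(n+1)²h_{n+1} = 4(28n² + 28n + 9)h_n − 64(4n − 1)(4n + 1)h_{n−1} for n ≥ 1. Then h_n > 0 for all n ≥ 0. -/
/-! The ratio bound `16 h_n ≤ h_{n+1}` propagates along the recurrence, because of the identity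
`3(n+1)²(h_{n+1} - 16 h_n) = 4(16n² - 1)(h_n - 16 h_{n-1}) + 8(2n - 1) h_n`
(16 is the smaller root of the characteristic equation `3r² = 112r - 1024`, the other being 64/3).
Positivity follows, since `h_0 = 1 > 0` and `h_1 = 24 ≥ 16 h_0`. -/

theorem sixteen_mul_le_of_lewyAskey_recurrence {x a b c : ℝ} (hx : 1 ≤ x)
    (hrec : 3 * (x + 1) ^ 2 * c = 4 * (28 * x ^ 2 + 28 * x + 9) * b
      - 64 * (4 * x - 1) * (4 * x + 1) * a)
    (hb : 0 ≤ b) (hab : 16 * a ≤ b) : 16 * b ≤ c := by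
  have identity : 3 * (x + 1) ^ 2 * (c - 16 * b)
      = 4 * (16 * x ^ 2 - 1) * (b - 16 * a) + 8 * (2 * x - 1) * b := by
    linear_combination hrec
  have hrhs : 0 ≤ 4 * (16 * x ^ 2 - 1) * (b - 16 * a) + 8 * (2 * x - 1) * b := by
    have hx2 : 0 ≤ 16 * x ^ 2 - 1 := by nlinarith
    have := mul_nonneg (mul_nonneg (by norm_num : (0:ℝ) ≤ 4) hx2) (sub_nonneg.2 hab)
    have := mul_nonneg (mul_nonneg (by norm_num : (0:ℝ) ≤ 8) (by linarith : (0:ℝ) ≤ 2 * x - 1)) hb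
    linarith
  have hc : 0 ≤ c - 16 * b :=
    nonneg_of_mul_nonneg_right (identity ▸ hrhs) (by positivity)
  linarith

theorem lewy_askey_diagonal_positive
    (h : ℕ → ℝ) (h0 : h 0 = 1) (h1 : h 1 = 24)
    (hh : ∀ n : ℕ, 1 ≤ n →
      3 * ((n : ℝ) + 1) ^ 2 * h (n + 1) =
        4 * (28 * n ^ 2 + 28 * n + 9) * h n - 64 * (4 * n - 1) * (4 * n + 1) * h (n - 1)) :
    ∀ n : ℕ, 0 < h n := by
  have key : ∀ n : ℕ, 0 < h n ∧ 16 * h n ≤ h (n + 1) := by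
    intro n
    induction n with
    | zero => rw [h0, h1]; norm_num
    | succ n ih =>
      obtain ⟨hpos, hratio⟩ := ih
      have hpos' : 0 < h (n + 1) := by linarith
      have hrec := hh (n + 1) n.succ_pos
      rw [Nat.add_sub_cancel] at hrec
      exact ⟨hpos', sixteen_mul_le_of_lewyAskey_recurrence (by simp) hrec hpos'.le hratio⟩
  exact fun n => (key n).1
end

section
/- Let (d_n)_{n≥0} be defined by d_0 = 1, d_1 = 4, and (n+1)³d_{n+1} = 4(2n+1)(3n² + 3n + 1)d_n − 16n³d_{n−1} for n ≥ 1. Then d_n > 0 for all n ≥ 0. -/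
/-! The sequence grows at least fourfold at every step: `4 d₀ ≤ d₁`, and if `4 d_{m-1} ≤ d_m`
with `d_m ≥ 0`, the recurrence forces `4 d_m ≤ d_{m+1}`, because
`(m+1)³ (d_{m+1} - 4 d_m) = 4 m³ (d_m - 4 d_{m-1}) + 8 m (m+1) (2m+1) d_m`.
Positivity follows from `d₀ = 1`. -/

lemma four_mul_le_of_recurrence {m a b c : ℝ} (hm : 0 ≤ m)
    (hrec : (m + 1) ^ 3 * c = 4 * (2 * m + 1) * (3 * m ^ 2 + 3 * m + 1) * b - 16 * m ^ 3 * a)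
    (hb : 0 ≤ b) (hab : 4 * a ≤ b) : 4 * b ≤ c := by
  have key : (m + 1) ^ 3 * (c - 4 * b) =
      4 * m ^ 3 * (b - 4 * a) + 8 * m * (m + 1) * (2 * m + 1) * b := by
    linear_combination hrec
  have hnonneg : 0 ≤ (m + 1) ^ 3 * (c - 4 * b) := by
    rw [key]
    have : 0 ≤ b - 4 * a := by linarith
    positivity
  have := nonneg_of_mul_nonneg_right hnonneg (by positivity)
  linarith

lemma pos_and_four_mul_le_succ (d : ℕ → ℝ) (h0 : d 0 = 1) (h1 : d 1 = 4)
    (hd : ∀ n : ℕ, 1 ≤ n →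
      ((n : ℝ) + 1) ^ 3 * d (n + 1) =
        4 * (2 * n + 1) * (3 * n ^ 2 + 3 * n + 1) * d n - 16 * n ^ 3 * d (n - 1)) (n : ℕ) :
    0 < d n ∧ 4 * d n ≤ d (n + 1) := by
  induction n with
  | zero => norm_num [h0, h1]
  | succ n ih =>
    obtain ⟨hpos, hle⟩ := ih
    have hpos' : 0 < d (n + 1) := by linarith
    refine ⟨hpos', four_mul_le_of_recurrence (Nat.cast_nonneg (n + 1)) ?_ hpos'.le hle⟩
    simpa using hd (n + 1) n.succ_pos

theorem kauers_zeilberger_diagonal_positive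
    (d : ℕ → ℝ) (h0 : d 0 = 1) (h1 : d 1 = 4)
    (hd : ∀ n : ℕ, 1 ≤ n →
      ((n : ℝ) + 1) ^ 3 * d (n + 1) =
        4 * (2 * n + 1) * (3 * n ^ 2 + 3 * n + 1) * d n - 16 * n ^ 3 * d (n - 1)) :
    ∀ n : ℕ, 0 < d n :=
  fun n => (pos_and_four_mul_le_succ d h0 h1 hd n).1
end

section
/- Let (u_n)_{n≥0} be a nontrivial solution of the recurrence (n+1)²u_{n+1} = (9n² + 9n + 3)u_n − 27n²u_{n−1} for n ≥ 1. Then (u_n) is not eventually sign-definite; that is, for every N there exists n ≥ N with u_n u_{n+1} ≤ 0. -/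
/-! Along a stretch where `u` keeps a constant sign, the ratios `r n = u (n + 1) / u n` are positive,
and the recurrence forces `r (n + 1) ≤ r n - 1 / r n`: this amounts to the positive semidefiniteness
of the binary quadratic form `(m + 1)²(q² - p²) - (9m² + 9m + 3)pq + 27m²p²`, whose discriminant
`-23m⁴ - 38m³ + 51m² + 70m + 13` is negative for `m ≥ 2`. Such a sequence decreases by at least
`1 / r 0` at every step, so it cannot stay positive. -/

theorem exists_nonpos_of_le_sub_inv {r : ℕ → ℝ} (hstep : ∀ n, r (n + 1) ≤ r n - (r n)⁻¹) :
    ∃ n, r n ≤ 0 := by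
  by_contra! hpos
  have hanti : Antitone r := antitone_nat_of_succ_le fun n => by
    linarith [hstep n, inv_pos.2 (hpos n)]
  have hbound : ∀ n : ℕ, r n ≤ r 0 - n * (r 0)⁻¹ := by
    intro n
    induction n with
    | zero => simp
    | succ n ih =>
      have hinv : (r 0)⁻¹ ≤ (r n)⁻¹ := inv_anti₀ (hpos n) (hanti n.zero_le)
      push_cast
      linarith [hstep n]
  obtain ⟨k, hk⟩ := exists_nat_gt (r 0 ^ 2)
  have hlarge : r 0 < k * (r 0)⁻¹ := by
    rw [← div_eq_mul_inv, lt_div_iff₀ (hpos 0)]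
    nlinarith
  linarith [hbound k, hpos k]

theorem apery_quadratic_form_le {m : ℝ} (hm : 2 ≤ m) (p q : ℝ) :
    (9 * m ^ 2 + 9 * m + 3) * q * p - 27 * m ^ 2 * p ^ 2 ≤ (m + 1) ^ 2 * (q ^ 2 - p ^ 2) := by
  have hdisc : 0 ≤ 23 * m ^ 4 + 38 * m ^ 3 - 51 * m ^ 2 - 70 * m - 13 := by
    nlinarith [mul_nonneg (mul_nonneg (by linarith : (0 : ℝ) ≤ m - 2) (by linarith : (0 : ℝ) ≤ m))
      (by linarith : (0 : ℝ) ≤ m)]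
  have hsquares : 4 * (m + 1) ^ 2 * ((m + 1) ^ 2 * (q ^ 2 - p ^ 2)
        - ((9 * m ^ 2 + 9 * m + 3) * q * p - 27 * m ^ 2 * p ^ 2))
      = (2 * (m + 1) ^ 2 * q - (9 * m ^ 2 + 9 * m + 3) * p) ^ 2
        + (23 * m ^ 4 + 38 * m ^ 3 - 51 * m ^ 2 - 70 * m - 13) * p ^ 2 := by
    ring
  rw [← sub_nonneg]
  refine nonneg_of_mul_nonneg_right ?_ (by positivity : (0 : ℝ) < 4 * (m + 1) ^ 2)
  rw [hsquares]
  positivity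

theorem apery_ratio_le_sub_inv {m p q w : ℝ} (hm : 2 ≤ m)
    (hrec : (m + 1) ^ 2 * w = (9 * m ^ 2 + 9 * m + 3) * q - 27 * m ^ 2 * p) (hpq : 0 < p * q) :
    w / q ≤ q / p - (q / p)⁻¹ := by
  have hp : p ≠ 0 := left_ne_zero_of_mul hpq.ne'
  have hq : q ≠ 0 := right_ne_zero_of_mul hpq.ne'
  have hwp : w * p ≤ q ^ 2 - p ^ 2 := by
    have hquad := apery_quadratic_form_le hm p q
    have hscaled : (m + 1) ^ 2 * (w * p) ≤ (m + 1) ^ 2 * (q ^ 2 - p ^ 2) := by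
      linear_combination p * hrec + hquad
    exact le_of_mul_le_mul_left hscaled (by positivity)
  have hdiff : w / q - (q / p - (q / p)⁻¹) = (w * p - (q ^ 2 - p ^ 2)) / (p * q) := by
    field_simp
  have : (w * p - (q ^ 2 - p ^ 2)) / (p * q) ≤ 0 :=
    div_nonpos_of_nonpos_of_nonneg (by linarith) hpq.le
  linarith

theorem apery_like_oscillatory_general
    (u : ℕ → ℝ)
    (hu : ∀ n : ℕ, 1 ≤ n →
      ((n : ℝ) + 1) ^ 2 * u (n + 1) =
        (9 * n ^ 2 + 9 * n + 3) * u n - 27 * n ^ 2 * u (n - 1)) :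
    ∀ N : ℕ, ∃ n : ℕ, N ≤ n ∧ u n * u (n + 1) ≤ 0 := by
  intro N
  by_contra! hsign
  have hstep : ∀ n, N + 1 ≤ n →
      u (n + 2) / u (n + 1) ≤ u (n + 1) / u n - (u (n + 1) / u n)⁻¹ := fun n hn =>
    apery_ratio_le_sub_inv (m := ((n + 1 : ℕ) : ℝ)) (by norm_cast; omega)
      (by simpa using hu (n + 1) (by omega)) (hsign n (by omega))
  obtain ⟨k, hk⟩ := exists_nonpos_of_le_sub_inv (r := fun k => u (N + 1 + k + 1) / u (N + 1 + k))
    fun k => hstep (N + 1 + k) (by omega)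
  have hratio_pos : 0 < u (N + 1 + k + 1) / u (N + 1 + k) :=
    div_pos_iff.2 (mul_pos_iff.1 (mul_comm (u (N + 1 + k)) _ ▸ hsign (N + 1 + k) (by omega)))
  exact hk.not_gt hratio_pos

theorem apery_like_oscillatory
    (u : ℕ → ℝ)
    (hu : ∀ n : ℕ, 1 ≤ n →
      ((n : ℝ) + 1) ^ 2 * u (n + 1) =
        (9 * n ^ 2 + 9 * n + 3) * u n - 27 * n ^ 2 * u (n - 1))
    (hnontriv : ∃ n : ℕ, u n ≠ 0) :
    ∀ N : ℕ, ∃ n : ℕ, N ≤ n ∧ u n * u (n + 1) ≤ 0 :=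
  apery_like_oscillatory_general u hu
end

section
/- Let a(n), b(n), c(n) be real polynomials in n of the same degree δ, with a(n) = anᵟ + a′nᵟ⁻¹ + …, b(n) = bnᵟ + b′nᵟ⁻¹ + …, c(n) = cnᵟ + c′nᵟ⁻¹ + …, a, b, c > 0, and a(n), b(n), c(n) > 0 for all integers n ≥ 1. Define B(n) = b(n+1)a(n) − b(n)a(n+1), C(n) = c(n+1)a(n) − c(n)a(n+1), B = ba′ − b′a, C = ca′ − c′a, and suppose B > 0 and C > 0; set λ₀ = C/B. Let (u_n)_{n≥0} be a solution of a(n)u_{n+1} = b(n)u_n − c(n)u_{n−1} (n ≥ 1) with u_n > 0 for all n ≥ 0. If C·B(n) ≥ B·C(n) ≥ 0 for all n ≥ 1 and u_2/u_1 ≥ u_1/u_0 ≥ λ₀, then (u_n)_{n≥0} is log-convex, i.e., u_{n−1}u_{n+1} ≥ u_n² for all n ≥ 1. -/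
/-!
By induction on `n` one shows together that `u(n+1)/u(n) ≥ λ₀` and `u(n)u(n+2) ≥ u(n+1)²`; the
ratio bound propagates because the ratios increase. Combining the recurrence at `n` and `n+1`
with log-convexity at `n-1` gives
`a(n)a(n+1)(u(n)u(n+2) - u(n+1)²) ≥ u(n)(B(n)u(n+1) - C(n)u(n))`,
and the right side is nonnegative since `u(n+1)/u(n) ≥ λ₀ = C/B` and `C·B(n) ≥ B·C(n) ≥ 0`.
-/

/-- The paper's `B(n)` is `casoratian b a n` and `C(n)` is `casoratian c a n`. -/
def casoratian (f g : ℕ → ℝ) (n : ℕ) : ℝ := f (n + 1) * g n - f n * g (n + 1)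

section LogConvexity

variable {a b c u : ℕ → ℝ} {β γ : ℝ} {n : ℕ}

lemma mul_le_mul_succ_of_sq_le (hβ : 0 ≤ β) (hu : 0 < u n) (hu₁ : 0 ≤ u (n + 1))
    (hbound : γ * u n ≤ β * u (n + 1)) (hconv : u (n + 1) ^ 2 ≤ u n * u (n + 2)) :
    γ * u (n + 1) ≤ β * u (n + 2) := by
  refine le_of_mul_le_mul_left ?_ hu
  calc u n * (γ * u (n + 1)) = (γ * u n) * u (n + 1) := by ring
    _ ≤ (β * u (n + 1)) * u (n + 1) := by gcongr
    _ = β * u (n + 1) ^ 2 := by ring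
    _ ≤ β * (u n * u (n + 2)) := by gcongr
    _ = u n * (β * u (n + 2)) := by ring

lemma casoratian_mul_le (hβ : 0 < β) (hγ : 0 < γ) (hu : 0 < u n)
    (hBC : β * casoratian c a n ≤ γ * casoratian b a n) (hC : 0 ≤ β * casoratian c a n)
    (hbound : γ * u n ≤ β * u (n + 1)) :
    casoratian c a n * u n ≤ casoratian b a n * u (n + 1) := by
  have hB : 0 ≤ casoratian b a n := nonneg_of_mul_nonneg_right (hC.trans hBC) hγ
  refine le_of_mul_le_mul_left ?_ hβ
  calc β * (casoratian c a n * u n) = (β * casoratian c a n) * u n := by ring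
    _ ≤ (γ * casoratian b a n) * u n := by gcongr
    _ = casoratian b a n * (γ * u n) := by ring
    _ ≤ casoratian b a n * (β * u (n + 1)) := by gcongr
    _ = β * (casoratian b a n * u (n + 1)) := by ring

lemma sq_le_mul_of_casoratian
    (hrec₁ : a (n + 1) * u (n + 2) = b (n + 1) * u (n + 1) - c (n + 1) * u n)
    (hrec₂ : a (n + 2) * u (n + 3) = b (n + 2) * u (n + 2) - c (n + 2) * u (n + 1))
    (ha₁ : 0 < a (n + 1)) (ha₂ : 0 < a (n + 2)) (hc : 0 ≤ c (n + 1)) (hu : 0 < u (n + 1))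
    (hconv : u (n + 1) ^ 2 ≤ u n * u (n + 2))
    (hcas : casoratian c a (n + 1) * u (n + 1) ≤ casoratian b a (n + 1) * u (n + 2)) :
    u (n + 2) ^ 2 ≤ u (n + 1) * u (n + 3) := by
  refine le_of_mul_le_mul_left ?_ (mul_pos ha₁ ha₂)
  unfold casoratian at hcas
  have hc_conv := mul_le_mul_of_nonneg_left hconv (mul_nonneg ha₂.le hc)
  have hcas' := mul_le_mul_of_nonneg_left hcas hu.le
  linear_combination (a (n + 2) * u (n + 2)) * hrec₁ - (a (n + 1) * u (n + 1)) * hrec₂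
    + hc_conv + hcas'

theorem sq_le_mul_of_recurrence (hβ : 0 < β) (hγ : 0 < γ)
    (ha : ∀ n, 1 ≤ n → 0 < a n) (hc : ∀ n, 1 ≤ n → 0 ≤ c n)
    (hrec : ∀ n, a (n + 1) * u (n + 2) = b (n + 1) * u (n + 1) - c (n + 1) * u n)
    (hu : ∀ n, 0 < u n)
    (hBC : ∀ n, 1 ≤ n → β * casoratian c a n ≤ γ * casoratian b a n ∧ 0 ≤ β * casoratian c a n)
    (hconv₀ : u 1 ^ 2 ≤ u 0 * u 2) (hbound₀ : γ * u 0 ≤ β * u 1) (n : ℕ) :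
    u (n + 1) ^ 2 ≤ u n * u (n + 2) := by
  suffices ∀ n, γ * u n ≤ β * u (n + 1) ∧ u (n + 1) ^ 2 ≤ u n * u (n + 2) from (this n).2
  intro n
  induction n with
  | zero => exact ⟨hbound₀, hconv₀⟩
  | succ n ih =>
    obtain ⟨hbound, hconv⟩ := ih
    have hbound' := mul_le_mul_succ_of_sq_le hβ.le (hu n) (hu _).le hbound hconv
    obtain ⟨hBC', hC⟩ := hBC (n + 1) (by omega)
    refine ⟨hbound', sq_le_mul_of_casoratian (hrec n) (hrec (n + 1)) (ha _ (by omega))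
      (ha _ (by omega)) (hc _ (by omega)) (hu _) hconv ?_⟩
    exact casoratian_mul_le hβ hγ (hu _) hBC' hC hbound'

end LogConvexity

theorem log_convexity_criterion_general
    (P Q R : Polynomial ℝ)
    (hPpos : ∀ n : ℕ, 1 ≤ n → 0 < P.eval (n : ℝ))
    (hRpos : ∀ n : ℕ, 1 ≤ n → 0 < R.eval (n : ℝ))
    (B C : ℕ → ℝ)
    (hBdef : ∀ n : ℕ, B n = Q.eval ((n : ℝ) + 1) * P.eval (n : ℝ)
                              - Q.eval (n : ℝ) * P.eval ((n : ℝ) + 1))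
    (hCdef : ∀ n : ℕ, C n = R.eval ((n : ℝ) + 1) * P.eval (n : ℝ)
                              - R.eval (n : ℝ) * P.eval ((n : ℝ) + 1))
    (Bc Cc : ℝ)
    (hBcpos : 0 < Bc) (hCcpos : 0 < Cc)
    (lam0 : ℝ) (hlam0 : lam0 = Cc / Bc)
    (u : ℕ → ℝ)
    (hu : ∀ n : ℕ, 1 ≤ n →
      P.eval (n : ℝ) * u (n + 1) = Q.eval (n : ℝ) * u n - R.eval (n : ℝ) * u (n - 1))
    (hupos : ∀ n : ℕ, 0 < u n)
    (hBC : ∀ n : ℕ, 1 ≤ n → Cc * B n ≥ Bc * C n ∧ Bc * C n ≥ 0)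
    (hx1 : u 2 / u 1 ≥ u 1 / u 0) (hx0 : u 1 / u 0 ≥ lam0) :
    ∀ n : ℕ, 1 ≤ n → u (n - 1) * u (n + 1) ≥ u n ^ 2 := by
  set a : ℕ → ℝ := fun n ↦ P.eval (n : ℝ)
  set b : ℕ → ℝ := fun n ↦ Q.eval (n : ℝ)
  set c : ℕ → ℝ := fun n ↦ R.eval (n : ℝ)
  have hB : ∀ n, B n = casoratian b a n := fun n ↦ by simp [hBdef, casoratian, a, b]
  have hC : ∀ n, C n = casoratian c a n := fun n ↦ by simp [hCdef, casoratian, a, c]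
  have hrec (n : ℕ) : a (n + 1) * u (n + 2) = b (n + 1) * u (n + 1) - c (n + 1) * u n := by
    simpa [a, b, c] using hu (n + 1) (by omega)
  have hconv₀ : u 1 ^ 2 ≤ u 0 * u 2 := by
    rw [ge_iff_le, div_le_div_iff₀ (hupos 0) (hupos 1)] at hx1; linarith
  have hbound₀ : Cc * u 0 ≤ Bc * u 1 := by
    rw [hlam0, ge_iff_le, div_le_div_iff₀ hBcpos (hupos 0)] at hx0; linarith
  rintro (_ | n) hn
  · omega
  · have := sq_le_mul_of_recurrence hBcpos hCcpos hPpos (fun n hn ↦ (hRpos n hn).le) hrec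
      hupos (fun n hn ↦ by rw [← hB, ← hC]; exact hBC n hn) hconv₀ hbound₀ n
    simpa using this

/-- Here `P`, `Q`, `R` play the roles of the polynomials `a(n)`, `b(n)`, `c(n)`;
`Bc = b a' - b' a` and `Cc = c a' - c' a` are the leading coefficients of
`B(n) = b(n+1)a(n) - b(n)a(n+1)` and `C(n) = c(n+1)a(n) - c(n)a(n+1)`,
where `a', b', c'` are the coefficients of `n^(δ-1)`. -/
theorem log_convexity_criterion
    (δ : ℕ) (P Q R : Polynomial ℝ)
    (hPd : P.natDegree = δ) (hQd : Q.natDegree = δ) (hRd : R.natDegree = δ)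
    (hPl : 0 < P.leadingCoeff) (hQl : 0 < Q.leadingCoeff) (hRl : 0 < R.leadingCoeff)
    (hPpos : ∀ n : ℕ, 1 ≤ n → 0 < P.eval (n : ℝ))
    (hQpos : ∀ n : ℕ, 1 ≤ n → 0 < Q.eval (n : ℝ))
    (hRpos : ∀ n : ℕ, 1 ≤ n → 0 < R.eval (n : ℝ))
    (B C : ℕ → ℝ)
    (hBdef : ∀ n : ℕ, B n = Q.eval ((n : ℝ) + 1) * P.eval (n : ℝ)
                              - Q.eval (n : ℝ) * P.eval ((n : ℝ) + 1))
    (hCdef : ∀ n : ℕ, C n = R.eval ((n : ℝ) + 1) * P.eval (n : ℝ)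
                              - R.eval (n : ℝ) * P.eval ((n : ℝ) + 1))
    (Bc Cc : ℝ)
    (hBc : Bc = Q.leadingCoeff * P.coeff (δ - 1) - Q.coeff (δ - 1) * P.leadingCoeff)
    (hCc : Cc = R.leadingCoeff * P.coeff (δ - 1) - R.coeff (δ - 1) * P.leadingCoeff)
    (hBcpos : 0 < Bc) (hCcpos : 0 < Cc)
    (lam0 : ℝ) (hlam0 : lam0 = Cc / Bc)
    (u : ℕ → ℝ)
    (hu : ∀ n : ℕ, 1 ≤ n →
      P.eval (n : ℝ) * u (n + 1) = Q.eval (n : ℝ) * u n - R.eval (n : ℝ) * u (n - 1))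
    (hupos : ∀ n : ℕ, 0 < u n)
    (hBC : ∀ n : ℕ, 1 ≤ n → Cc * B n ≥ Bc * C n ∧ Bc * C n ≥ 0)
    (hx1 : u 2 / u 1 ≥ u 1 / u 0) (hx0 : u 1 / u 0 ≥ lam0) :
    ∀ n : ℕ, 1 ≤ n → u (n - 1) * u (n + 1) ≥ u n ^ 2 :=
  log_convexity_criterion_general P Q R hPpos hRpos B C hBdef hCdef Bc Cc hBcpos hCcpos lam0 hlam0 u
    hu hupos hBC hx1 hx0
end

section
/- Let (u_n)_{n≥0} be defined by u_0 = 1, u_1 = 6, and (n+1)³u_{n+1} = (2n+1)(14n² + 14n + 6)u_n − n(192n² − 12)u_{n−1} for n ≥ 1. Then u_n > 0 for all n ≥ 0 and the sequence is log-convex, i.e., u_{n−1}u_{n+1} ≥ u_n² for all n ≥ 1. -/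
/-!
Write `r n = u n / u (n - 1)`. The recurrence reads `r (n + 1) = step n (r n)` for the map
`step n r = (a n - b n / r) / (n + 1) ^ 3`, which is increasing in `r > 0`, and log-convexity at `n`
is `r n ≤ r (n + 1)`, i.e. `charQuad n (r n) ≤ 0`: the ratio lies between the two fixed points of
`step n`. The interval `[6 (2n - 1) / n, 8 (2n + 1) / (n + 2)]` lies between these fixed points and
is mapped by `step n` into the interval for `n + 1`, so by induction every `r n` stays in it. Its
left end is positive, which also gives `u n > 0`.
-/

open Set

namespace CooperApery

def a (n : ℝ) : ℝ := (2 * n + 1) * (14 * n ^ 2 + 14 * n + 6)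

def b (n : ℝ) : ℝ := n * (192 * n ^ 2 - 12)

noncomputable def step (n r : ℝ) : ℝ := (a n - b n / r) / (n + 1) ^ 3

def charQuad (n x : ℝ) : ℝ := (n + 1) ^ 3 * x ^ 2 - a n * x + b n

noncomputable def lower (n : ℝ) : ℝ := 6 * (2 * n - 1) / n

noncomputable def upper (n : ℝ) : ℝ := 8 * (2 * n + 1) / (n + 2)

theorem quadratic_nonpos_of_mem_Icc {α β γ p q x : ℝ} (hα : 0 ≤ α)
    (hp : α * p ^ 2 + β * p + γ ≤ 0) (hq : α * q ^ 2 + β * q + γ ≤ 0) (hx : x ∈ Icc p q) :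
    α * x ^ 2 + β * x + γ ≤ 0 := by
  obtain ⟨hpx, hxq⟩ := hx
  rcases hpx.eq_or_lt with rfl | hpx
  · exact hp
  -- `(q - p) P(x) = (q - x) P(p) + (x - p) P(q) + α (q - p) (x - p) (x - q)`
  have hpq : 0 < q - p := by linarith
  refine nonpos_of_mul_nonpos_right ?_ hpq
  nlinarith [mul_nonneg (sub_nonneg.2 hxq) (neg_nonneg.2 hp),
    mul_nonneg (sub_nonneg.2 hpx.le) (neg_nonneg.2 hq),
    mul_nonneg (mul_nonneg hα hpq.le) (mul_nonneg (sub_nonneg.2 hpx.le) (sub_nonneg.2 hxq))]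

variable {n : ℝ}

theorem step_sub_self {r : ℝ} (hn : n + 1 ≠ 0) (hr : r ≠ 0) :
    step n r - r = -charQuad n r / (r * (n + 1) ^ 3) := by
  unfold step charQuad
  field_simp
  ring

theorem le_step_of_charQuad_nonpos {r : ℝ} (hn : 0 < n + 1) (hr : 0 < r) (h : charQuad n r ≤ 0) :
    r ≤ step n r := by
  rw [← sub_nonneg, step_sub_self hn.ne' hr.ne']
  exact div_nonneg (neg_nonneg.2 h) (by positivity)

theorem step_mono {r s : ℝ} (hn : 1 ≤ n) (hr : 0 < r) (hrs : r ≤ s) : step n r ≤ step n s := by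
  have hb : 0 ≤ b n := by unfold b; nlinarith
  unfold step
  gcongr

theorem lower_pos (hn : 1 ≤ n) : 0 < lower n := by
  unfold lower
  exact div_pos (by linarith) (by linarith)

/- In the next four lemmas, substituting `n = t + 1` leaves polynomial inequalities in `t ≥ 0`
whose coefficients are all of one sign. -/

theorem charQuad_lower_nonpos (hn : 1 ≤ n) : charQuad n (lower n) ≤ 0 := by
  obtain ⟨t, ht, rfl⟩ : ∃ t, 0 ≤ t ∧ n = t + 1 := ⟨n - 1, by linarith, by ring⟩
  unfold charQuad lower a b
  field_simp
  nlinarith [mul_nonneg ht ht, pow_nonneg ht 3, pow_nonneg ht 4]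

theorem charQuad_upper_nonpos (hn : 1 ≤ n) : charQuad n (upper n) ≤ 0 := by
  obtain ⟨t, ht, rfl⟩ : ∃ t, 0 ≤ t ∧ n = t + 1 := ⟨n - 1, by linarith, by ring⟩
  unfold charQuad upper a b
  field_simp
  nlinarith [mul_nonneg ht ht, pow_nonneg ht 3, pow_nonneg ht 4]

theorem lower_succ_le_step_lower (hn : 1 ≤ n) : lower (n + 1) ≤ step n (lower n) := by
  obtain ⟨t, ht, rfl⟩ : ∃ t, 0 ≤ t ∧ n = t + 1 := ⟨n - 1, by linarith, by ring⟩
  have h : 0 < 2 * (t + 1) - 1 := by linarith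
  unfold step lower a b
  field_simp
  nlinarith [mul_nonneg ht ht, pow_nonneg ht 3, pow_nonneg ht 4, pow_nonneg ht 5]

theorem step_upper_le_upper_succ (hn : 1 ≤ n) : step n (upper n) ≤ upper (n + 1) := by
  obtain ⟨t, ht, rfl⟩ : ∃ t, 0 ≤ t ∧ n = t + 1 := ⟨n - 1, by linarith, by ring⟩
  unfold step upper a b
  field_simp
  nlinarith [mul_nonneg ht ht, pow_nonneg ht 3, pow_nonneg ht 4, pow_nonneg ht 5]

theorem le_step_of_mem_Icc {r : ℝ} (hn : 1 ≤ n) (hr : r ∈ Icc (lower n) (upper n)) :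
    r ≤ step n r := by
  have hq (x : ℝ) : charQuad n x = (n + 1) ^ 3 * x ^ 2 + -a n * x + b n := by
    unfold charQuad; ring
  refine le_step_of_charQuad_nonpos (by linarith) ((lower_pos hn).trans_le hr.1) ?_
  have hl := charQuad_lower_nonpos hn
  have hu := charQuad_upper_nonpos hn
  rw [hq] at hl hu ⊢
  exact quadratic_nonpos_of_mem_Icc (by positivity) hl hu hr

theorem step_mem_Icc {r : ℝ} (hn : 1 ≤ n) (hr : r ∈ Icc (lower n) (upper n)) :
    step n r ∈ Icc (lower (n + 1)) (upper (n + 1)) :=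
  ⟨(lower_succ_le_step_lower hn).trans (step_mono hn (lower_pos hn) hr.1),
    (step_mono hn ((lower_pos hn).trans_le hr.1) hr.2).trans (step_upper_le_upper_succ hn)⟩

theorem div_eq_step {x y z : ℝ} (hn : n + 1 ≠ 0) (hy : y ≠ 0)
    (h : (n + 1) ^ 3 * z = a n * y - b n * x) : z / y = step n (y / x) := by
  unfold step
  rw [div_div_eq_mul_div]
  field_simp
  linarith

theorem ratio_mem_Icc {u : ℕ → ℝ} (h0 : u 0 = 1) (h1 : u 1 = 6)
    (hu : ∀ n : ℕ, 1 ≤ n → ((n : ℝ) + 1) ^ 3 * u (n + 1) = a n * u n - b n * u (n - 1))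
    {n : ℕ} (hn : 1 ≤ n) : 0 < u (n - 1) ∧ u n / u (n - 1) ∈ Icc (lower n) (upper n) := by
  induction n, hn using Nat.le_induction with
  | base => norm_num [h0, h1, lower, upper]
  | succ k hk ih =>
    obtain ⟨hpos, hr⟩ := ih
    have hk' : (1 : ℝ) ≤ k := by exact_mod_cast hk
    have hpos' : 0 < u k := (div_pos_iff_of_pos_right hpos).1 ((lower_pos hk').trans_le hr.1)
    refine ⟨hpos', ?_⟩
    rw [Nat.add_sub_cancel, div_eq_step (by positivity) hpos'.ne' (hu k hk)]
    push_cast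
    exact step_mem_Icc hk' hr

end CooperApery

open CooperApery in
theorem cooper_apery_like_positive_log_convex
    (u : ℕ → ℝ) (h0 : u 0 = 1) (h1 : u 1 = 6)
    (hu : ∀ n : ℕ, 1 ≤ n →
      ((n : ℝ) + 1) ^ 3 * u (n + 1) =
        (2 * n + 1) * (14 * n ^ 2 + 14 * n + 6) * u n
          - n * (192 * n ^ 2 - 12) * u (n - 1)) :
    (∀ n : ℕ, 0 < u n) ∧ (∀ n : ℕ, 1 ≤ n → u (n - 1) * u (n + 1) ≥ u n ^ 2) := by
  have hr {n : ℕ} (hn : 1 ≤ n) := ratio_mem_Icc h0 h1 hu hn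
  have pos (n : ℕ) : 0 < u n := (hr n.succ_pos).1
  refine ⟨pos, fun n hn => ?_⟩
  have hmono : u n / u (n - 1) ≤ u (n + 1) / u n := by
    rw [div_eq_step (by positivity) (pos n).ne' (hu n hn)]
    exact le_step_of_mem_Icc (by exact_mod_cast hn) (hr hn).2
  rw [div_le_div_iff₀ (pos _) (pos _)] at hmono
  rwa [ge_iff_le, sq, mul_comm (u (n - 1))]
end

section
/- Let (L_n)_{n≥0} be any nontrivial solution of the recurrence (n+1)L_{n+1} = 2nL_n − nL_{n−1} for n ≥ 1. Then (L_n) is oscillatory: for every positive integer N there exists n ≥ N such that L_n L_{n+1} ≤ 0. -/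
/-!
With `a n = (n + 1) * (L (n + 1) - L n)` the recurrence reads `a (n + 1) = a n - L (n + 1)`.
If `L` were eventually positive, `a` would be eventually decreasing. It cannot stay nonnegative:
then `L` would be nondecreasing and `a` would drop by at least `L N` at each step. So eventually
`a n ≤ -c < 0`, i.e. `L (n + 1) - L n ≤ -c / (n + 1)`, and the divergence of the harmonic series
drives `L` to `-∞`. By linearity the same holds for eventually negative solutions, so the sign
cannot stay constant.
-/

open Filter Finset

theorem tendsto_atBot_of_succ_le_sub_div {u : ℕ → ℝ} {c : ℝ} (hc : 0 < c) {M : ℕ}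
    (h : ∀ n ≥ M, u (n + 1) ≤ u n - c / (n + 1)) : Tendsto u atTop atBot := by
  set H : ℕ → ℝ := fun n => ∑ i ∈ range n, 1 / ((i : ℝ) + 1)
  have hv : AntitoneOn (fun n => u n + c * H n) {n | M ≤ n} :=
    antitoneOn_nat_Ici_of_succ_le fun n hn => by
      simp only [H, sum_range_succ, mul_add, mul_one_div]
      linarith [h n hn]
  have hu : ∀ᶠ n in atTop, u n ≤ (u M + c * H M) + -(c * H n) := by
    filter_upwards [eventually_ge_atTop M] with n hn
    linarith [hv (show M ≤ M from le_rfl) hn hn]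
  exact tendsto_atBot_mono' atTop hu <| tendsto_atBot_add_const_left _ _ <|
    tendsto_neg_atTop_atBot.comp (Real.tendsto_sum_range_one_div_nat_succ_atTop.const_mul_atTop hc)

theorem pos_of_forall_mul_succ_pos {u : ℕ → ℝ} {N : ℕ} (h : ∀ n ≥ N, 0 < u n * u (n + 1))
    (hN : 0 < u N) : ∀ n ≥ N, 0 < u n :=
  Nat.le_induction hN fun n hn hun => pos_of_mul_pos_right (h n hn) hun.le

theorem not_forall_pos_of_laguerre_recurrence {L : ℕ → ℝ}
    (hrec : ∀ n : ℕ,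
      ((n : ℝ) + 2) * L (n + 2) = 2 * ((n : ℝ) + 1) * L (n + 1) - ((n : ℝ) + 1) * L n)
    (N : ℕ) : ¬ ∀ n ≥ N, 0 < L n := by
  intro hpos
  set a : ℕ → ℝ := fun n => ((n : ℝ) + 1) * (L (n + 1) - L n)
  have ha_succ : ∀ n, a (n + 1) = a n - L (n + 1) := fun n => by
    simp only [a]; push_cast; linarith [hrec n]
  have ha_anti : AntitoneOn a {n | N ≤ n} := antitoneOn_nat_Ici_of_succ_le fun n hn => by
    linarith [ha_succ n, hpos (n + 1) (by omega)]
  obtain ⟨M, hNM, haM⟩ : ∃ M ≥ N, a M < 0 := by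
    by_contra! ha_nonneg
    have hL_mono : MonotoneOn L {n | N ≤ n} := monotoneOn_nat_Ici_of_le_succ fun n hn =>
      sub_nonneg.1 <| nonneg_of_mul_nonneg_right (ha_nonneg n hn) (by positivity)
    have ha_lim : Tendsto a atTop atBot :=
      tendsto_atBot_of_succ_le_sub_div (hpos N le_rfl) (M := N) fun n hn => by
        have : L N / (n + 1) ≤ L N := div_le_self (hpos N le_rfl).le (by linarith)
        linarith [ha_succ n, hL_mono (show N ≤ N from le_rfl) (show N ≤ n + 1 by omega) (by omega)]
    obtain ⟨n, han, hn⟩ := ((ha_lim.eventually_lt_atBot 0).and (eventually_ge_atTop N)).exists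
    exact han.not_ge (ha_nonneg n hn)
  have hL_lim : Tendsto L atTop atBot :=
    tendsto_atBot_of_succ_le_sub_div (neg_pos.2 haM) (M := M) fun n hn => by
      have hdiff : L (n + 1) - L n = a n / (n + 1) := by
        simp only [a]; field_simp
      have : a n / (n + 1) ≤ a M / (n + 1) :=
        div_le_div_of_nonneg_right (ha_anti (show N ≤ M from hNM) (show N ≤ n by omega) hn)
          (by positivity)
      rw [neg_div]
      linarith
  obtain ⟨n, hLn, hn⟩ := ((hL_lim.eventually_lt_atBot 0).and (eventually_ge_atTop N)).exists
  exact hLn.not_gt (hpos n hn)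

theorem laguerre_at_one_oscillatory_general
    (L : ℕ → ℝ)
    (hL : ∀ n : ℕ, 1 ≤ n →
      ((n : ℝ) + 1) * L (n + 1) = 2 * n * L n - n * L (n - 1)) :
    ∀ N : ℕ, 1 ≤ N → ∃ n : ℕ, N ≤ n ∧ L n * L (n + 1) ≤ 0 := by
  intro N _
  by_contra! hprod
  have hrec : ∀ n : ℕ,
      ((n : ℝ) + 2) * L (n + 2) = 2 * ((n : ℝ) + 1) * L (n + 1) - ((n : ℝ) + 1) * L n := by
    intro n
    have := hL (n + 1) (by omega)
    push_cast at this
    linarith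
  rcases (left_ne_zero_of_mul (hprod N le_rfl).ne').lt_or_gt with hneg | hpos
  · refine not_forall_pos_of_laguerre_recurrence (L := -L) (fun n => ?_) N
      (pos_of_forall_mul_succ_pos (fun n hn => ?_) (neg_pos.2 hneg))
    · simp only [Pi.neg_apply]; linarith [hrec n]
    · simpa only [Pi.neg_apply, neg_mul_neg] using hprod n hn
  · exact not_forall_pos_of_laguerre_recurrence hrec N (pos_of_forall_mul_succ_pos hprod hpos)

theorem laguerre_at_one_oscillatory
    (L : ℕ → ℝ)
    (hL : ∀ n : ℕ, 1 ≤ n →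
      ((n : ℝ) + 1) * L (n + 1) = 2 * n * L n - n * L (n - 1))
    (hnontriv : ∃ n : ℕ, L n ≠ 0) :
    ∀ N : ℕ, 1 ≤ N → ∃ n : ℕ, N ≤ n ∧ L n * L (n + 1) ≤ 0 :=
  laguerre_at_one_oscillatory_general L hL
end
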